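/- arXiv:1312.3708 — 6 statements merged into one kernel-verified Lean document; each statement's English description precedes it below -/
import Mathlib

section
/- Let λ and μ be m-multipartitions of n, let s be a standard λ-tableau and t a standard μ-tableau. If res_s(k) = res_t(k) in ℚ(q_1,…,q_m) for all k = 1,…,n, then λ = μ and s = t. -/
open scoped BigOperators

/-- A partition, encoded by its sequence of parts: `part k` is the `(k+1)`-st part
`λ_{k+1}`; so the (weakly decreasing, eventually zero) sequence `λ_1, λ_2, …`
is `part 0, part 1, …`. -/
structure Ptn : Type where
  part : ℕ → ℕ
  antitone : Antitone part
  finite_support : ∃ N, ∀ k, N ≤ k → part k = 0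

namespace Ptn

/-- The part `λ_i` for `i ≥ 1` (1-indexed). -/
def row (l : Ptn) (i : ℕ) : ℕ := l.part (i - 1)

/-- The diagram of a partition, as the set of 1-indexed nodes `(i, j)` with
`1 ≤ j ≤ λ_i`. -/
def cells (l : Ptn) : Set (ℕ × ℕ) := {x | 1 ≤ x.1 ∧ 1 ≤ x.2 ∧ x.2 ≤ l.row x.1}

/-- The conjugate partition: `conj l j = λ̂_j = #{i ≥ 1 | λ_i ≥ j}` (for `j ≥ 1`). -/
noncomputable def conj (l : Ptn) (j : ℕ) : ℕ := Set.ncard {k : ℕ | j ≤ l.part k}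

/-- A node of `λ` is removable if deleting it leaves the diagram of a partition. -/
def removable (l : Ptn) : Set (ℕ × ℕ) :=
  {x | x ∈ l.cells ∧ ∃ m : Ptn, m.cells = l.cells \ {x}}

/-- A node not in `λ` is addable if adjoining it gives the diagram of a partition. -/
def addable (l : Ptn) : Set (ℕ × ℕ) :=
  {x | x ∉ l.cells ∧ ∃ m : Ptn, m.cells = l.cells ∪ {x}}

/-- The generalized hook length `h^{λ,μ}_{i,j} = λ_i − i + μ̂_j − j + 1` (an integer). -/
noncomputable def ghook (l mu : Ptn) (x : ℕ × ℕ) : ℤ :=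
  (l.row x.1 : ℤ) - (x.1 : ℤ) + (mu.conj x.2 : ℤ) - (x.2 : ℤ) + 1

/-- The hook length `h^λ_{i,j} = λ_i − i + λ̂_j − j + 1`. -/
noncomputable def hook (l : Ptn) (x : ℕ × ℕ) : ℤ := l.ghook l x

/-- The residue of the node `(a, b)`: `res (a, b) = b − a`. -/
def res (x : ℕ × ℕ) : ℤ := (x.2 : ℤ) - (x.1 : ℤ)

end Ptn

/-- An `m`-multipartition: an `m`-tuple of partitions. -/
def MPtn (m : ℕ) : Type := Fin m → Ptn

namespace MPtn

variable {m : ℕ}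

/-- The diagram: nodes `(i, j, c)` with `(i, j)` in the diagram of the `c`-th component. -/
def cells (l : MPtn m) : Set (ℕ × ℕ × Fin m) := {x | (x.1, x.2.1) ∈ (l x.2.2).cells}

/-- The number of nodes; `l.size = n` says `l` is an `m`-multipartition of `n`. -/
noncomputable def size (l : MPtn m) : ℕ := l.cells.ncard

/-- Removable nodes, defined componentwise. -/
def removable (l : MPtn m) : Set (ℕ × ℕ × Fin m) :=
  {x | (x.1, x.2.1) ∈ (l x.2.2).removable}

/-- Addable nodes, defined componentwise. -/
def addable (l : MPtn m) : Set (ℕ × ℕ × Fin m) :=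
  {x | (x.1, x.2.1) ∈ (l x.2.2).addable}

end MPtn

/-- A `λ`-tableau with entries `1, …, n`, encoded by the map sending `k : Fin n`
(representing the entry `k + 1`) to the node containing that entry; being a tableau
means this is a bijection from the entries onto the diagram of `λ`. -/
def IsTableau {m : ℕ} (l : MPtn m) (n : ℕ) (T : Fin n → ℕ × ℕ × Fin m) : Prop :=
  Function.Injective T ∧ Set.range T = l.cells

/-- A tableau is standard if, within each component, entries increase along rows
and down columns. -/
def IsStandard {m n : ℕ} (T : Fin n → ℕ × ℕ × Fin m) : Prop :=
  ∀ k l : Fin n, (T k).2.2 = (T l).2.2 →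
    (((T k).1 = (T l).1 ∧ (T k).2.1 < (T l).2.1) ∨
      ((T k).2.1 = (T l).2.1 ∧ (T k).1 < (T l).1)) → k < l

/-- The field `F = ℚ(q_1, …, q_m)` of rational functions in indeterminates `q_1, …, q_m`. -/
abbrev FF (m : ℕ) : Type := FractionRing (MvPolynomial (Fin m) ℚ)

/-- The indeterminate `q_c` as an element of `ℚ(q_1, …, q_m)`. -/
noncomputable def qF {m : ℕ} (c : Fin m) : FF m :=
  algebraMap (MvPolynomial (Fin m) ℚ) (FF m) (MvPolynomial.X c)

/-- The residue `res (a, b, c) = b − a + q_c ∈ ℚ(q_1, …, q_m)` of a node `(a, b, c)`. -/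
noncomputable def resF {m : ℕ} (x : ℕ × ℕ × Fin m) : FF m :=
  (x.2.1 : FF m) - (x.1 : FF m) + qF x.2.2

/-!
Induct on the entry `k`. The residue `b - a + q_c` of a node determines its component `c` and
its content `b - a`, so if `s` and `t` agree below `k`, their nodes for `k` lie on the same
diagonal of the same component. Were the node `(a', b', c)` of `t` strictly below the node
`(a, b, c)` of `s`, its left neighbour `(a', b' - 1, c)` would carry a smaller entry of `t`,
hence of `s`; but in the standard tableau `s` that node lies weakly south-east of `(a, b, c)`,
so its entry would exceed `k`.
-/

lemma qF_injective {m : ℕ} : Function.Injective (qF : Fin m → FF m) :=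
  (IsFractionRing.injective (MvPolynomial (Fin m) ℚ) (FF m)).comp MvPolynomial.X_injective

lemma intCast_add_qF_inj {m : ℕ} {d e : ℤ} {c c' : Fin m}
    (h : (d : FF m) + qF c = (e : FF m) + qF c') : d = e ∧ c = c' := by
  have hpoly : ((d : MvPolynomial (Fin m) ℚ) + MvPolynomial.X c)
      = (e : MvPolynomial (Fin m) ℚ) + MvPolynomial.X c' := by
    apply IsFractionRing.injective (MvPolynomial (Fin m) ℚ) (FF m)
    simpa only [qF, map_add, map_intCast] using h
  have hde : d = e := by
    simpa using congrArg MvPolynomial.constantCoeff hpoly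
  subst hde
  exact ⟨rfl, qF_injective (add_left_cancel h)⟩

lemma resF_eq_resF {m : ℕ} {x y : ℕ × ℕ × Fin m} (h : resF x = resF y) :
    x.2.2 = y.2.2 ∧ Ptn.res (x.1, x.2.1) = Ptn.res (y.1, y.2.1) := by
  have h' : (Ptn.res (x.1, x.2.1) : FF m) + qF x.2.2
      = (Ptn.res (y.1, y.2.1) : FF m) + qF y.2.2 := by
    simpa [Ptn.res, resF] using h
  exact (intCast_add_qF_inj h').symm

lemma Ptn.row_antitone (l : Ptn) : Antitone l.row :=
  fun _ _ h => l.antitone (Nat.sub_le_sub_right h 1)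

lemma Ptn.eq_of_cells_eq {l l' : Ptn} (h : l.cells = l'.cells) : l = l' := by
  have hpart : ∀ k, l.part k = l'.part k := by
    intro k
    have hiff : ∀ j, 1 ≤ j → (j ≤ l.part k ↔ j ≤ l'.part k) := by
      intro j hj
      simpa [Ptn.cells, Ptn.row, hj] using Set.ext_iff.mp h (k + 1, j)
    have h1 := hiff (l.part k)
    have h2 := hiff (l'.part k)
    omega
  obtain ⟨p, _, _⟩ := l
  obtain ⟨p', _, _⟩ := l'
  obtain rfl : p = p' := funext hpart
  rfl

lemma MPtn.eq_of_cells_eq {m : ℕ} {l l' : MPtn m} (h : l.cells = l'.cells) : l = l' :=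
  funext fun c => Ptn.eq_of_cells_eq <| Set.ext fun x => Set.ext_iff.mp h (x.1, x.2, c)

namespace IsTableau

variable {m n : ℕ} {lam : MPtn m} {S : Fin n → ℕ × ℕ × Fin m}

lemma mem_cells (hS : IsTableau lam n S) (k : Fin n) : S k ∈ lam.cells :=
  hS.2 ▸ ⟨k, rfl⟩

lemma exists_eq_of_mem_cells (hS : IsTableau lam n S) {x : ℕ × ℕ × Fin m}
    (hx : x ∈ lam.cells) : ∃ k, S k = x := by
  rwa [← hS.2] at hx

lemma le_of_same_row (hS : IsTableau lam n S) (hstd : IsStandard S) {k l : Fin n}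
    (hc : (S k).2.2 = (S l).2.2) (hrow : (S k).1 = (S l).1) (hcol : (S k).2.1 ≤ (S l).2.1) :
    k ≤ l := by
  rcases hcol.lt_or_eq with hlt | heq
  · exact (hstd k l hc (Or.inl ⟨hrow, hlt⟩)).le
  · exact (hS.1 (Prod.ext hrow (Prod.ext heq hc))).le

lemma le_of_same_col (hS : IsTableau lam n S) (hstd : IsStandard S) {k l : Fin n}
    (hc : (S k).2.2 = (S l).2.2) (hcol : (S k).2.1 = (S l).2.1) (hrow : (S k).1 ≤ (S l).1) :
    k ≤ l := by
  rcases hrow.lt_or_eq with hlt | heq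
  · exact (hstd k l hc (Or.inr ⟨hcol, hlt⟩)).le
  · exact (hS.1 (Prod.ext heq (Prod.ext hcol hc))).le

/-- Compare both entries with the one at the corner `((S k).1, (S l).2.1)`, which lies in the
diagram. -/
lemma le_of_row_le_of_col_le (hS : IsTableau lam n S) (hstd : IsStandard S) {k l : Fin n}
    (hc : (S k).2.2 = (S l).2.2) (hrow : (S k).1 ≤ (S l).1) (hcol : (S k).2.1 ≤ (S l).2.1) :
    k ≤ l := by
  obtain ⟨hk1, -, -⟩ := hS.mem_cells k
  obtain ⟨-, hl1, hl⟩ := hS.mem_cells l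
  have hcorner : ((S k).1, (S l).2.1, (S l).2.2) ∈ lam.cells :=
    ⟨hk1, hl1, hl.trans ((lam _).row_antitone hrow)⟩
  obtain ⟨r, hr⟩ := hS.exists_eq_of_mem_cells hcorner
  calc k ≤ r := hS.le_of_same_row hstd (by rw [hr, hc]) (by rw [hr]) (by rw [hr]; exact hcol)
    _ ≤ l := hS.le_of_same_col hstd (by rw [hr]) (by rw [hr]) (by rw [hr]; exact hrow)

end IsTableau

variable {m n : ℕ} {lam mu : MPtn m} {S T : Fin n → ℕ × ℕ × Fin m}

lemma not_row_lt_of_eq_below (hS : IsTableau lam n S) (hSstd : IsStandard S)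
    (hT : IsTableau mu n T) (hTstd : IsStandard T) {k : Fin n} (hbelow : ∀ l < k, S l = T l)
    (hc : (S k).2.2 = (T k).2.2)
    (hres : Ptn.res ((S k).1, (S k).2.1) = Ptn.res ((T k).1, (T k).2.1)) :
    ¬ (S k).1 < (T k).1 := by
  intro hlt
  obtain ⟨-, hS2, -⟩ := hS.mem_cells k
  obtain ⟨hT1, -, hT3⟩ := hT.mem_cells k
  dsimp only at hS2 hT1 hT3
  simp only [Ptn.res] at hres
  have hleft : ((T k).1, (T k).2.1 - 1, (T k).2.2) ∈ mu.cells :=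
    ⟨hT1, by dsimp only; omega, by dsimp only; omega⟩
  obtain ⟨l, hl⟩ := hT.exists_eq_of_mem_cells hleft
  have hlk : l < k :=
    hTstd l k (by rw [hl]) (Or.inl ⟨by rw [hl], by rw [hl]; dsimp only; omega⟩)
  have hSl : S l = ((T k).1, (T k).2.1 - 1, (T k).2.2) := (hbelow l hlk).trans hl
  have hkl : k ≤ l := hS.le_of_row_le_of_col_le hSstd (by rw [hSl, hc])
    (by rw [hSl]; exact hlt.le) (by rw [hSl]; dsimp only; omega)
  exact hkl.not_gt hlk

lemma eq_of_resF_eq (hS : IsTableau lam n S) (hSstd : IsStandard S)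
    (hT : IsTableau mu n T) (hTstd : IsStandard T) (hres : ∀ k, resF (S k) = resF (T k)) :
    S = T := by
  funext k
  induction k using WellFoundedLT.induction with
  | _ k hbelow =>
    obtain ⟨hc, hcontent⟩ := resF_eq_resF (hres k)
    have h1 := not_row_lt_of_eq_below hS hSstd hT hTstd hbelow hc hcontent
    have h2 := not_row_lt_of_eq_below hT hTstd hS hSstd (fun l hl => (hbelow l hl).symm)
      hc.symm hcontent.symm
    have hrow : (S k).1 = (T k).1 := by omega
    simp only [Ptn.res] at hcontent
    exact Prod.ext hrow (Prod.ext (by omega) hc)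

theorem statement0_general {m n : ℕ} (lam mu : MPtn m)
    (S T : Fin n → ℕ × ℕ × Fin m)
    (hS : IsTableau lam n S) (hSstd : IsStandard S)
    (hT : IsTableau mu n T) (hTstd : IsStandard T)
    (hres : ∀ k : Fin n, resF (S k) = resF (T k)) :
    lam = mu ∧ S = T := by
  have hST : S = T := eq_of_resF_eq hS hSstd hT hTstd hres
  refine ⟨MPtn.eq_of_cells_eq ?_, hST⟩
  rw [← hS.2, ← hT.2, hST]

theorem statement0 {m n : ℕ} (lam mu : MPtn m)
    (hlam : lam.size = n) (hmu : mu.size = n)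
    (S T : Fin n → ℕ × ℕ × Fin m)
    (hS : IsTableau lam n S) (hSstd : IsStandard S)
    (hT : IsTableau mu n T) (hTstd : IsStandard T)
    (hres : ∀ k : Fin n, resF (S k) = resF (T k)) :
    lam = mu ∧ S = T :=
  statement0_general lam mu S T hS hSstd hT hTstd hres
end

section
/- Let λ be an m-multipartition of n and let s and t be standard λ-tableaux. Suppose there exists i with 1 ≤ i ≤ n−1 such that res_s(k) = res_t(k) in ℚ(q_1,…,q_m) for all k ≠ i, i+1. Then either s = t, or s is obtained from t by interchanging the entries i and i+1 (i.e. s = t composed with the transposition (i, i+1) of values). -/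
open scoped BigOperators

/-!
The residue `b − a + q_c` of a node determines its component `c` and its diagonal `b − a`,
because the `q_c` are independent indeterminates. Two distinct nodes on one diagonal of
one component are comparable in the north-west order, so no two up-left closed sets can
each contain one of them but not the other. Hence a shape has at most one addable and
at most one removable node of each residue. By induction upwards from the empty shape,
`s↓k` and `t↓k` have the same shape for `k < i`; by induction downwards from `λ`, also for
`k > i + 1`. So `s` and `t` agree at every entry other than `i, i + 1`, and since both are
bijections onto the diagram of `λ`, they agree or differ by swapping these two entries.
-/

open Function

lemma Function.Injective.eq_or_eq_comp_swap {α β : Type*} [DecidableEq α] {f g : α → β}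
    (hf : Injective f) (hfg : Set.range f = Set.range g) {a b : α}
    (h : ∀ k, k ≠ a → k ≠ b → f k = g k) : f = g ∨ f = g ∘ Equiv.swap a b := by
  have hpre : ∀ c, c = a ∨ c = b → f c = g a ∨ f c = g b := by
    intro c hc
    obtain ⟨p, hp⟩ : f c ∈ Set.range g := hfg ▸ Set.mem_range_self c
    by_cases hpa : p = a
    · exact Or.inl (hpa ▸ hp.symm)
    by_cases hpb : p = b
    · exact Or.inr (hpb ▸ hp.symm)
    obtain rfl : p = c := hf (h p hpa hpb ▸ hp)
    rcases hc with rfl | rfl <;> contradiction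
  have hid : f a = g a → f b = g b → f = g := fun ha hb => funext fun k => by
    rcases eq_or_ne k a with rfl | hka
    · exact ha
    rcases eq_or_ne k b with rfl | hkb
    · exact hb
    exact h k hka hkb
  have hswap : f a = g b → f b = g a → f = g ∘ Equiv.swap a b := fun ha hb =>
    funext fun k => by
      rcases eq_or_ne k a with rfl | hka
      · simpa using ha
      rcases eq_or_ne k b with rfl | hkb
      · simpa using hb
      simpa [Equiv.swap_apply_of_ne_of_ne hka hkb] using h k hka hkb
  rcases hpre a (Or.inl rfl) with ha | ha <;> rcases hpre b (Or.inr rfl) with hb | hb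
  · obtain rfl := hf (ha.trans hb.symm)
    exact Or.inl (hid ha ha)
  · exact Or.inl (hid ha hb)
  · exact Or.inr (hswap ha hb)
  · obtain rfl := hf (ha.trans hb.symm)
    exact Or.inl (hid hb hb)

section Shapes

variable {m n : ℕ}

lemma component_eq_and_res_eq_of_resF_eq {x y : ℕ × ℕ × Fin m} (h : resF x = resF y) :
    x.2.2 = y.2.2 ∧ Ptn.res (x.1, x.2.1) = Ptn.res (y.1, y.2.1) := by
  have key : (MvPolynomial.C (Ptn.res (x.1, x.2.1) : ℚ) + MvPolynomial.X x.2.2 :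
      MvPolynomial (Fin m) ℚ) =
        MvPolynomial.C (Ptn.res (y.1, y.2.1) : ℚ) + MvPolynomial.X y.2.2 := by
    apply IsFractionRing.injective (MvPolynomial (Fin m) ℚ) (FF m)
    simpa [resF, qF, Ptn.res] using h
  have hc : x.2.2 = y.2.2 := by
    have := congrArg (MvPolynomial.coeff (Finsupp.single x.2.2 1)) key
    simp only [MvPolynomial.coeff_add, MvPolynomial.coeff_C, MvPolynomial.coeff_X,
      Finsupp.single_eq_single_iff] at this
    simpa [Finsupp.single_ne_zero.symm, eq_comm] using this
  refine ⟨hc, ?_⟩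
  have := congrArg MvPolynomial.constantCoeff key
  simpa using this

def IsNorthwest (x y : ℕ × ℕ × Fin m) : Prop :=
  x.2.2 = y.2.2 ∧ x.1 ≤ y.1 ∧ x.2.1 ≤ y.2.1

def IsUpLeftClosedIn (C A : Set (ℕ × ℕ × Fin m)) : Prop :=
  ∀ x ∈ C, ∀ y ∈ A, IsNorthwest x y → x ∈ A

lemma resF_ne_of_mem_of_notMem {C A B : Set (ℕ × ℕ × Fin m)} (hA : IsUpLeftClosedIn C A)
    (hB : IsUpLeftClosedIn C B) {x y : ℕ × ℕ × Fin m} (hxC : x ∈ C) (hyC : y ∈ C)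
    (hxA : x ∈ A) (hxB : x ∉ B) (hyB : y ∈ B) (hyA : y ∉ A) : resF x ≠ resF y := by
  intro h
  obtain ⟨hc, hd⟩ := component_eq_and_res_eq_of_resF_eq h
  simp only [Ptn.res] at hd
  rcases le_total x.1 y.1 with hle | hle
  · exact hxB (hB x hxC y hyB ⟨hc, hle, by omega⟩)
  · exact hyA (hA y hyC x hxA ⟨hc.symm, hle, by omega⟩)

lemma MPtn.mem_cells_of_isNorthwest {lam : MPtn m} {x y : ℕ × ℕ × Fin m}
    (hy : y ∈ lam.cells) (hx1 : 1 ≤ x.1) (hx2 : 1 ≤ x.2.1) (h : IsNorthwest x y) :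
    x ∈ lam.cells := by
  obtain ⟨hc, h1, h2⟩ := h
  obtain ⟨-, -, hrow⟩ := hy
  refine ⟨hx1, hx2, h2.trans (hrow.trans ?_)⟩
  rw [← hc]
  exact (lam x.2.2).antitone (by omega)

variable {lam : MPtn m} {S T : Fin n → ℕ × ℕ × Fin m}

lemma IsTableau.mem_cells_s1 (hS : IsTableau lam n S) (k : Fin n) : S k ∈ lam.cells :=
  hS.2 ▸ Set.mem_range_self k

lemma IsTableau.exists_eq (hS : IsTableau lam n S) {x : ℕ × ℕ × Fin m}
    (hx : x ∈ lam.cells) : ∃ k, S k = x :=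
  show x ∈ Set.range S from hS.2 ▸ hx

lemma IsStandard.le_of_isNorthwest (hstd : IsStandard S) (hS : IsTableau lam n S)
    {p q : Fin n} (h : IsNorthwest (S p) (S q)) : p ≤ q := by
  induction q using WellFoundedLT.induction with
  | _ q ih =>
  obtain ⟨hc, h1, h2⟩ := h
  obtain ⟨hp1, hp2, -⟩ := hS.mem_cells_s1 p
  rcases h1.lt_or_eq with h1 | h1
  · obtain ⟨r, hr⟩ := hS.exists_eq (x := ((S q).1 - 1, (S q).2.1, (S q).2.2))
      (MPtn.mem_cells_of_isNorthwest (hS.mem_cells_s1 q) (by dsimp only; omega)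
        (by dsimp only; omega) ⟨rfl, by dsimp only; omega, le_rfl⟩)
    simp only [Prod.ext_iff] at hr
    obtain ⟨hr1, hr2, hr3⟩ := hr
    have hrq : r < q := hstd r q hr3 (Or.inr ⟨hr2, by omega⟩)
    exact (ih r hrq ⟨hc.trans hr3.symm, by omega, by omega⟩).trans hrq.le
  rcases h2.lt_or_eq with h2 | h2
  · obtain ⟨r, hr⟩ := hS.exists_eq (x := ((S q).1, (S q).2.1 - 1, (S q).2.2))
      (MPtn.mem_cells_of_isNorthwest (hS.mem_cells_s1 q) (by dsimp only; omega)
        (by dsimp only; omega) ⟨rfl, le_rfl, by dsimp only; omega⟩)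
    simp only [Prod.ext_iff] at hr
    obtain ⟨hr1, hr2, hr3⟩ := hr
    have hrq : r < q := hstd r q hr3 (Or.inl ⟨hr1, by omega⟩)
    exact (ih r hrq ⟨hc.trans hr3.symm, by omega, by omega⟩).trans hrq.le
  · exact (hS.1 (Prod.ext h1 (Prod.ext h2 hc))).le

/-- The cells holding the entries `1, …, k`, i.e. the shape of `S↓k`. -/
def initialShape (S : Fin n → ℕ × ℕ × Fin m) (k : ℕ) : Set (ℕ × ℕ × Fin m) :=
  S '' {j | (j : ℕ) < k}

lemma initialShape_zero : initialShape S 0 = ∅ := by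
  simp [initialShape]

lemma initialShape_succ (k : Fin n) :
    initialShape S (k + 1) = insert (S k) (initialShape S k) := by
  ext x
  simp [initialShape, le_iff_eq_or_lt, or_and_right, exists_or, eq_comm, Fin.val_inj]

lemma IsTableau.initialShape_self (hS : IsTableau lam n S) : initialShape S n = lam.cells := by
  simp [initialShape, ← hS.2]

lemma IsTableau.notMem_initialShape (hS : IsTableau lam n S) (k : Fin n) :
    S k ∉ initialShape S k := by
  rintro ⟨j, hj, hjk⟩
  exact (hS.1 hjk ▸ hj : (k : ℕ) < k).false

lemma IsStandard.isUpLeftClosedIn_initialShape (hstd : IsStandard S) (hS : IsTableau lam n S)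
    (k : ℕ) : IsUpLeftClosedIn lam.cells (initialShape S k) := by
  rintro x hx _ ⟨q, hq, rfl⟩ hxq
  obtain ⟨p, rfl⟩ := hS.exists_eq hx
  exact ⟨p, lt_of_le_of_lt (Fin.le_def.mp (hstd.le_of_isNorthwest hS hxq)) hq, rfl⟩

lemma eq_of_initialShape_eq (hS : IsTableau lam n S) (hSstd : IsStandard S)
    (hT : IsTableau lam n T) (hTstd : IsStandard T) (k : Fin n)
    (hshape : initialShape S k = initialShape T k) (hres : resF (S k) = resF (T k)) :
    S k = T k := by
  by_contra hne
  have hSk : S k ∉ initialShape T k := hshape ▸ hS.notMem_initialShape k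
  have hTk : T k ∉ initialShape S k := hshape ▸ hT.notMem_initialShape k
  refine resF_ne_of_mem_of_notMem (hSstd.isUpLeftClosedIn_initialShape hS (k + 1))
    (hTstd.isUpLeftClosedIn_initialShape hT (k + 1)) (hS.mem_cells_s1 k) (hT.mem_cells_s1 k)
    ?_ ?_ ?_ ?_ hres <;> rw [initialShape_succ]
  · exact Set.mem_insert _ _
  · exact fun h => h.elim hne hSk
  · exact Set.mem_insert _ _
  · exact fun h => h.elim (Ne.symm hne) hTk

lemma eq_of_initialShape_succ_eq (hS : IsTableau lam n S) (hSstd : IsStandard S)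
    (hT : IsTableau lam n T) (hTstd : IsStandard T) (k : Fin n)
    (hshape : initialShape S (k + 1) = initialShape T (k + 1))
    (hres : resF (S k) = resF (T k)) : S k = T k := by
  by_contra hne
  have hSk : S k ∈ insert (T k) (initialShape T k) := by
    rw [← initialShape_succ, ← hshape, initialShape_succ]
    exact Set.mem_insert _ _
  have hTk : T k ∈ insert (S k) (initialShape S k) := by
    rw [← initialShape_succ, hshape, initialShape_succ]
    exact Set.mem_insert _ _
  exact resF_ne_of_mem_of_notMem (hTstd.isUpLeftClosedIn_initialShape hT k)
    (hSstd.isUpLeftClosedIn_initialShape hS k) (hS.mem_cells_s1 k) (hT.mem_cells_s1 k)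
    (hSk.resolve_left hne) (hS.notMem_initialShape k) (hTk.resolve_left (Ne.symm hne))
    (hT.notMem_initialShape k) hres

lemma initialShape_eq_of_resF_eq_below (hS : IsTableau lam n S) (hSstd : IsStandard S)
    (hT : IsTableau lam n T) (hTstd : IsStandard T) {a : ℕ} (ha : a ≤ n)
    (hres : ∀ k : Fin n, (k : ℕ) < a → resF (S k) = resF (T k)) :
    initialShape S a = initialShape T a := by
  induction a with
  | zero => rw [initialShape_zero, initialShape_zero]
  | succ a ih =>
    let k : Fin n := ⟨a, ha⟩
    have hk : initialShape S k = initialShape T k :=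
      ih (by omega) fun j hj => hres j (by omega)
    change initialShape S (k + 1) = initialShape T (k + 1)
    rw [initialShape_succ, initialShape_succ, hk,
      eq_of_initialShape_eq hS hSstd hT hTstd k hk (hres k (Nat.lt_succ_self a))]

lemma initialShape_eq_of_resF_eq_above (hS : IsTableau lam n S) (hSstd : IsStandard S)
    (hT : IsTableau lam n T) (hTstd : IsStandard T) {a : ℕ} (ha : a ≤ n)
    (hres : ∀ k : Fin n, a ≤ k → resF (S k) = resF (T k)) :
    initialShape S a = initialShape T a := by
  induction ha using Nat.decreasingInduction with
  | self => rw [hS.initialShape_self, hT.initialShape_self]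
  | of_succ a ha ih =>
    let k : Fin n := ⟨a, ha⟩
    have hk : initialShape S (k + 1) = initialShape T (k + 1) :=
      ih fun j hj => hres j (by omega)
    have hkeq := eq_of_initialShape_succ_eq hS hSstd hT hTstd k hk (hres k le_rfl)
    have hSk := hS.notMem_initialShape k
    rw [hkeq] at hSk
    rw [initialShape_succ, initialShape_succ, hkeq] at hk
    change initialShape S k = initialShape T k
    rw [← Set.insert_sdiff_self_of_notMem hSk, hk,
      Set.insert_sdiff_self_of_notMem (hT.notMem_initialShape k)]

end Shapes

theorem statement1_general {m n : ℕ} (lam : MPtn m)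
    (S T : Fin n → ℕ × ℕ × Fin m)
    (hS : IsTableau lam n S) (hSstd : IsStandard S)
    (hT : IsTableau lam n T) (hTstd : IsStandard T)
    (a b : Fin n) (hab : (b : ℕ) = (a : ℕ) + 1)
    (hres : ∀ k : Fin n, k ≠ a → k ≠ b → resF (S k) = resF (T k)) :
    S = T ∨ S = T ∘ (Equiv.swap a b) := by
  have hres_ne : ∀ k : Fin n, (k : ℕ) < a ∨ b < k → resF (S k) = resF (T k) := fun k hk =>
    hres k (fun h => by subst h; omega) (fun h => by subst h; omega)
  refine hS.1.eq_or_eq_comp_swap (hS.2.trans hT.2.symm) fun k hka hkb => ?_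
  rcases lt_or_gt_of_ne (Fin.val_ne_of_ne hka) with hk | hk
  · refine eq_of_initialShape_eq hS hSstd hT hTstd k ?_ (hres k hka hkb)
    exact initialShape_eq_of_resF_eq_below hS hSstd hT hTstd k.is_le'
      fun j hj => hres_ne j (Or.inl (hj.trans hk))
  · refine eq_of_initialShape_succ_eq hS hSstd hT hTstd k ?_ (hres k hka hkb)
    exact initialShape_eq_of_resF_eq_above hS hSstd hT hTstd k.isLt
      fun j hj => hres_ne j (Or.inr (by omega))

theorem statement1 {m n : ℕ} (lam : MPtn m) (hlam : lam.size = n)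
    (S T : Fin n → ℕ × ℕ × Fin m)
    (hS : IsTableau lam n S) (hSstd : IsStandard S)
    (hT : IsTableau lam n T) (hTstd : IsStandard T)
    (a b : Fin n) (hab : (b : ℕ) = (a : ℕ) + 1)
    (hres : ∀ k : Fin n, k ≠ a → k ≠ b → resF (S k) = resF (T k)) :
    S = T ∨ S = T ∘ (Equiv.swap a b) :=
  statement1_general lam S T hS hSstd hT hTstd a b hab hres
end

section
/- Let λ and μ be partitions, let α = (ı,ȷ) be a removable node of λ, and set ν = λ ∖ {α}. Define Θ_{λ,μ}(z) := ∏_{(i,j)∈μ} (h^{λ,μ}_{i,j} + z)^{-1} · ∏_{(i,j)∈λ} (h^{μ,λ}_{i,j} − z)^{-1} as an element of the field ℚ(z) of rational functions in one indeterminate z (and Θ_{ν,μ}(z) analogously with λ replaced by ν). Then Θ_{λ,μ}(z) / Θ_{ν,μ}(z) = ∏_{β∈R(μ)} (res(β) − res(α) − z) · ∏_{γ∈A(μ)} (res(γ) − res(α) − z)^{-1}. -/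
open scoped BigOperators

/-- `Θ_{λ,μ}(z) = ∏_{(i,j)∈μ} (h^{λ,μ}_{i,j} + z)⁻¹ · ∏_{(i,j)∈λ} (h^{μ,λ}_{i,j} − z)⁻¹`,
an element of the field `ℚ(z)` of rational functions in one indeterminate `z = RatFunc.X`. -/
noncomputable def Theta2 (lam mu : Ptn) : RatFunc ℚ :=
  (∏ᶠ x ∈ mu.cells, ((Ptn.ghook lam mu x : RatFunc ℚ) + RatFunc.X)⁻¹) *
    ∏ᶠ x ∈ lam.cells, ((Ptn.ghook mu lam x : RatFunc ℚ) - RatFunc.X)⁻¹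

/-
Removing `α = (a, b)` from `λ` changes only the row `a` of `λ` and the column `b` of `λ̂`, so in
`Θ_{λ,μ} / Θ_{ν,μ}` only the factors at the nodes of `μ` in row `a`, at the nodes of `ν` in
column `b`, and at `α` itself survive. With `w = res α + z` each of them is a ratio of linear forms
`n - w` with `n ∈ ℤ`. Grouping the columns `j` of row `a` according to `μ̂_j = i`, every group
telescopes to `(μ_i - i - w) / (μ_{i+1} - i - w)`; the factors of column `b` telescope in the same
way, and what is left is a product over the rows `i` with `μ_{i+1} < μ_i`. These rows carry the
removable nodes `(i, μ_i)` of `μ`, and, shifted by one, all addable nodes `(i + 1, μ_{i+1} + 1)`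
except `(1, μ_1 + 1)`.
-/

open Finset

lemma prod_Ico_div_of_ne_zero {G : Type*} [CommGroupWithZero G] (f : ℕ → G) (hf : ∀ i, f i ≠ 0)
    {m n : ℕ} (hmn : m ≤ n) : ∏ i ∈ Ico m n, f (i + 1) / f i = f n / f m := by
  lift f to ℕ → Gˣ using fun i => (hf i).isUnit
  simpa using congrArg Units.val (prod_Ico_div f hmn)

namespace Ptn

lemma mem_cells {l : Ptn} {x : ℕ × ℕ} : x ∈ l.cells ↔ 1 ≤ x.1 ∧ 1 ≤ x.2 ∧ x.2 ≤ l.row x.1 :=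
  Iff.rfl

section Basic

variable (l : Ptn)

lemma row_antitone_s2 : Antitone l.row :=
  fun _ _ h => l.antitone (Nat.sub_le_sub_right h 1)

lemma exists_row_eq_zero : ∃ N, ∀ i, N ≤ i → l.row i = 0 := by
  obtain ⟨N, hN⟩ := l.finite_support
  exact ⟨N + 1, fun i hi => hN (i - 1) (by omega)⟩

lemma le_part_iff_lt_conj (j k : ℕ) (hj : 1 ≤ j) : j ≤ l.part k ↔ k < l.conj j := by
  set S := {k : ℕ | j ≤ l.part k}
  have hdown : ∀ {a b}, a ≤ b → b ∈ S → a ∈ S := fun hab hb => hb.trans (l.antitone hab)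
  have hfin : S.Finite := by
    obtain ⟨N, hN⟩ := l.finite_support
    refine (Set.finite_Iio N).subset fun k hk => ?_
    by_contra h
    have := hN k (not_lt.mp h)
    simp only [S, Set.mem_ofPred_eq] at hk
    omega
  constructor
  · intro hk
    have := Set.ncard_le_ncard (fun a (ha : a ∈ Set.Iic k) => hdown ha hk) hfin
    rw [Set.ncard_Iic_nat] at this
    exact this
  · intro hk
    by_contra hkS
    have := Set.ncard_le_ncard (fun a (ha : a ∈ S) => show a ∈ Set.Iio k from
      not_le.mp fun h => hkS (hdown h ha)) (Set.finite_Iio k)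
    rw [Set.ncard_Iio_nat] at this
    exact absurd hk (not_lt.mpr this)

lemma le_row_iff_le_conj {i j : ℕ} (hi : 1 ≤ i) (hj : 1 ≤ j) : j ≤ l.row i ↔ i ≤ l.conj j := by
  rw [row, l.le_part_iff_lt_conj j (i - 1) hj]
  omega

lemma mem_cells_iff_le_conj {x : ℕ × ℕ} : x ∈ l.cells ↔ 1 ≤ x.1 ∧ 1 ≤ x.2 ∧ x.1 ≤ l.conj x.2 := by
  refine ⟨fun ⟨h1, h2, h3⟩ => ⟨h1, h2, ?_⟩, fun ⟨h1, h2, h3⟩ => ⟨h1, h2, ?_⟩⟩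
  · exact (l.le_row_iff_le_conj h1 h2).1 h3
  · exact (l.le_row_iff_le_conj h1 h2).2 h3

lemma cells_finite : l.cells.Finite := by
  obtain ⟨N, hN⟩ := l.exists_row_eq_zero
  refine ((Set.finite_Iio N).prod (Set.finite_Iic (l.row 1))).subset fun x ⟨h1, h2, h3⟩ => ?_
  have hrow : l.row x.1 ≤ l.row 1 := l.row_antitone_s2 h1
  have hx1 : x.1 < N := not_le.mp fun h => by have := hN _ h; omega
  exact ⟨hx1, by simp only [Set.mem_Iic]; omega⟩

lemma row_eq_of_forall_mem_iff {i n : ℕ} (hi : 1 ≤ i) (h : ∀ j, 1 ≤ j → ((i, j) ∈ l.cells ↔ j ≤ n)) :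
    l.row i = n := by
  have key : ∀ j, 1 ≤ j → (j ≤ l.row i ↔ j ≤ n) := fun j hj => by
    rw [← h j hj]; exact ⟨fun h' => ⟨hi, hj, h'⟩, fun h' => h'.2.2⟩
  by_contra hne
  rcases Nat.lt_or_gt_of_ne hne with hlt | hlt
  · have := (key n (by omega)).2 le_rfl; omega
  · have := (key _ (by omega)).1 le_rfl; omega

lemma conj_eq_of_forall_mem_iff {j n : ℕ} (hj : 1 ≤ j) (h : ∀ i, 1 ≤ i → ((i, j) ∈ l.cells ↔ i ≤ n)) :
    l.conj j = n := by
  have key : ∀ i, 1 ≤ i → (i ≤ l.conj j ↔ i ≤ n) := fun i hi => by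
    rw [← h i hi, mem_cells_iff_le_conj]; exact ⟨fun h' => ⟨hi, hj, h'⟩, fun h' => h'.2.2⟩
  by_contra hne
  rcases Nat.lt_or_gt_of_ne hne with hlt | hlt
  · have := (key n (by omega)).2 le_rfl; omega
  · have := (key _ (by omega)).1 le_rfl; omega

end Basic

section Removal

variable {lam nu : Ptn} {α : ℕ × ℕ}

lemma row_fst_of_removal (hα : α ∈ lam.cells) (hnu : nu.cells = lam.cells \ {α}) :
    lam.row α.1 = α.2 := by
  obtain ⟨h1, h2, h3⟩ := hα
  refine le_antisymm (not_lt.mp fun hlt => ?_) h3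
  have hnext : (α.1, α.2 + 1) ∈ nu.cells := by
    simp only [hnu, Set.mem_sdiff, Set.mem_singleton_iff, Prod.ext_iff, mem_cells]
    omega
  have hα' : α ∈ nu.cells := ⟨h1, h2, by have : α.2 + 1 ≤ nu.row α.1 := hnext.2.2; omega⟩
  simp [hnu] at hα'

lemma conj_snd_of_removal (hα : α ∈ lam.cells) (hnu : nu.cells = lam.cells \ {α}) :
    lam.conj α.2 = α.1 := by
  obtain ⟨h1, h2, h3⟩ := lam.mem_cells_iff_le_conj.1 hα
  refine le_antisymm (not_lt.mp fun hlt => ?_) h3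
  have hnext : (α.1 + 1, α.2) ∈ nu.cells := by
    simp only [hnu, Set.mem_sdiff, Set.mem_singleton_iff, Prod.ext_iff, mem_cells_iff_le_conj]
    omega
  have hα' : α ∈ nu.cells :=
    nu.mem_cells_iff_le_conj.2 ⟨h1, h2, by
      have : α.1 + 1 ≤ nu.conj α.2 := (nu.mem_cells_iff_le_conj.1 hnext).2.2; omega⟩
  simp [hnu] at hα'

lemma row_of_removal (hα : α ∈ lam.cells) (hnu : nu.cells = lam.cells \ {α}) {i : ℕ}
    (hi : 1 ≤ i) : nu.row i = if i = α.1 then α.2 - 1 else lam.row i := by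
  have hcorner := row_fst_of_removal hα hnu
  refine nu.row_eq_of_forall_mem_iff hi fun j hj => ?_
  simp only [hnu, Set.mem_sdiff, Set.mem_singleton_iff, Prod.ext_iff, mem_cells]
  split_ifs with h
  · subst h; omega
  · omega

lemma conj_of_removal (hα : α ∈ lam.cells) (hnu : nu.cells = lam.cells \ {α}) {j : ℕ}
    (hj : 1 ≤ j) : nu.conj j = if j = α.2 then α.1 - 1 else lam.conj j := by
  have hcorner := conj_snd_of_removal hα hnu
  refine nu.conj_eq_of_forall_mem_iff hj fun i hi => ?_
  simp only [hnu, Set.mem_sdiff, Set.mem_singleton_iff, Prod.ext_iff, mem_cells_iff_le_conj]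
  split_ifs with h
  · subst h; omega
  · omega

end Removal

def setPart (l : Ptn) (k n : ℕ) (hlo : l.part (k + 1) ≤ n) (hhi : ∀ m < k, n ≤ l.part m) : Ptn where
  part m := if m = k then n else l.part m
  antitone u v huv := by
    have := l.antitone huv
    dsimp only
    split_ifs with hv hu hu
    · exact le_rfl
    · exact hhi u (by omega)
    · exact (l.antitone (show k + 1 ≤ v by omega)).trans hlo
    · assumption
  finite_support := by
    obtain ⟨N, hN⟩ := l.finite_support
    exact ⟨max N (k + 1), fun m hm => by rw [if_neg (by omega)]; exact hN m (by omega)⟩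

lemma mem_setPart_cells {l : Ptn} {k n : ℕ} {hlo hhi} {x : ℕ × ℕ} :
    x ∈ (l.setPart k n hlo hhi).cells ↔
      1 ≤ x.1 ∧ 1 ≤ x.2 ∧ x.2 ≤ if x.1 = k + 1 then n else l.row x.1 := by
  simp only [mem_cells, row, setPart]
  constructor <;> rintro ⟨h1, h2, h3⟩ <;> refine ⟨h1, h2, ?_⟩ <;>
    simpa only [show x.1 - 1 = k ↔ x.1 = k + 1 by omega] using h3

section Shape

variable (l : Ptn)

def descentRows : Set ℕ := {i | 1 ≤ i ∧ l.row (i + 1) < l.row i}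

lemma removable_eq_image : l.removable = (fun i => (i, l.row i)) '' l.descentRows := by
  ext x
  constructor
  · rintro ⟨hx, m, hm⟩
    have hcorner := row_fst_of_removal hx hm
    have hrow := row_of_removal hx hm hx.1
    have hnext := row_of_removal hx hm (i := x.1 + 1) (by omega)
    have := m.row_antitone_s2 (Nat.le_add_right x.1 1)
    rw [if_pos rfl] at hrow
    rw [if_neg (by omega)] at hnext
    exact ⟨x.1, ⟨hx.1, by have := hx.2.1; omega⟩, Prod.ext rfl hcorner⟩
  · rintro ⟨i, ⟨hi, hdesc⟩, rfl⟩
    refine ⟨⟨hi, show 1 ≤ l.row i by omega, le_rfl⟩,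
      l.setPart (i - 1) (l.row i - 1) ?_ ?_, ?_⟩
    · simp only [row, show i + 1 - 1 = i - 1 + 1 by omega] at hdesc ⊢
      omega
    · exact fun m hm => (Nat.sub_le _ _).trans (l.antitone hm.le)
    · ext ⟨u, v⟩
      rw [mem_setPart_cells]
      simp only [Set.mem_sdiff, Set.mem_singleton_iff, Prod.ext_iff, mem_cells]
      split_ifs with h
      · subst h; simp only [show i - 1 + 1 = i by omega, true_and]; omega
      · omega

lemma addable_eq_image :
    l.addable = (fun i => (i + 1, l.row (i + 1) + 1)) '' insert 0 l.descentRows := by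
  ext x
  constructor
  · rintro ⟨hx, m, hm⟩
    have hxm : x ∈ m.cells := by simp [hm]
    have hl : l.cells = m.cells \ {x} := by simp [hm, hx]
    have hx1 : 1 ≤ x.1 := hxm.1
    have hx2 : 1 ≤ x.2 := hxm.2.1
    have hcorner := row_fst_of_removal hxm hl
    have hrow := row_of_removal hxm hl hx1
    rw [if_pos rfl] at hrow
    refine ⟨x.1 - 1, ?_, Prod.ext (by dsimp only; omega) ?_⟩
    · rcases Nat.lt_or_ge x.1 2 with h | h
      · exact Or.inl (by omega)
      · have hprev := row_of_removal hxm hl (i := x.1 - 1) (by omega)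
        rw [if_neg (by omega)] at hprev
        have := m.row_antitone_s2 (Nat.sub_le x.1 1)
        exact Or.inr ⟨by omega, by rw [show x.1 - 1 + 1 = x.1 by omega]; omega⟩
    · dsimp only
      rw [show x.1 - 1 + 1 = x.1 by omega]
      omega
  · rintro ⟨i, hi, rfl⟩
    have hlo : l.part (i + 1) ≤ l.part i + 1 := (l.antitone (Nat.le_succ i)).trans (Nat.le_succ _)
    have hhi : ∀ m < i, l.part i + 1 ≤ l.part m := by
      intro m hm
      rcases hi with rfl | ⟨-, hdesc⟩
      · omega
      · simp only [row, show i + 1 - 1 = i by omega] at hdesc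
        exact hdesc.trans_le (l.antitone (by omega))
    refine ⟨fun h => ?_, l.setPart i (l.part i + 1) hlo hhi, ?_⟩
    · have : l.row (i + 1) + 1 ≤ l.row (i + 1) := h.2.2
      omega
    ext ⟨u, v⟩
    rw [mem_setPart_cells]
    simp only [Set.mem_union, Set.mem_singleton_iff, Prod.ext_iff, mem_cells]
    split_ifs with h
    · subst h; simp only [row, Nat.add_sub_cancel, true_and]; omega
    · omega

end Shape

section Slices

variable {M : Type*} [CommMonoid M] (l : Ptn)

lemma finprod_cells_eq_prod_row {i : ℕ} (hi : 1 ≤ i) {F : ℕ × ℕ → M}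
    (hF : ∀ x ∈ l.cells, x.1 ≠ i → F x = 1) :
    ∏ᶠ x ∈ l.cells, F x = ∏ j ∈ range (l.row i), F (i, j + 1) := by
  classical
  rw [finprod_mem_eq_prod_of_subset F (t := (range (l.row i)).image fun j => (i, j + 1)),
    prod_image fun a _ b _ h => by simpa using h]
  · rintro x ⟨hx, hFx⟩
    obtain ⟨h1, h2, h3⟩ := hx
    have hxi : x.1 = i := by_contra fun h => hFx (hF x ⟨h1, h2, h3⟩ h)
    simp only [coe_image, coe_range, Set.mem_image, Set.mem_Iio]
    exact ⟨x.2 - 1, by rw [← hxi]; omega, Prod.ext hxi.symm (by dsimp only; omega)⟩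
  · simp only [coe_image, coe_range, Set.image_subset_iff]
    intro j hj
    exact ⟨hi, Nat.le_add_left 1 j, by simpa using hj⟩

lemma finprod_cells_eq_prod_col {j : ℕ} (hj : 1 ≤ j) {F : ℕ × ℕ → M}
    (hF : ∀ x ∈ l.cells, x.2 ≠ j → F x = 1) :
    ∏ᶠ x ∈ l.cells, F x = ∏ i ∈ range (l.conj j), F (i + 1, j) := by
  classical
  rw [finprod_mem_eq_prod_of_subset F (t := (range (l.conj j)).image fun i => (i + 1, j)),
    prod_image fun a _ b _ h => by simpa using h]
  · rintro x ⟨hx, hFx⟩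
    obtain ⟨h1, h2, h3⟩ := l.mem_cells_iff_le_conj.1 hx
    have hxj : x.2 = j := by_contra fun h => hFx (hF x hx h)
    simp only [coe_image, coe_range, Set.mem_image, Set.mem_Iio]
    exact ⟨x.1 - 1, by rw [← hxj]; omega, Prod.ext (by dsimp only; omega) hxj.symm⟩
  · simp only [coe_image, coe_range, Set.image_subset_iff]
    intro i hi
    exact l.mem_cells_iff_le_conj.2 ⟨Nat.le_add_left 1 i, hj, by simpa using hi⟩

end Slices

section RemovalRatio

variable {K : Type*} [Field K] (μ : Ptn) (w : K)

/- For the removed node `α = (a, b)` and `w = res α + z`, `colFactor w j` is the ratio of the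
factors of `Θ_{λ,μ}` and `Θ_{ν,μ}` at the node `(a, j)` of `μ`, and `rowFactor w i` the ratio at
the node `(i, b)` of `ν`; `stepFactor w i` is what the `colFactor`s of the columns `j` with
`μ̂_j = i` telescope to. -/

noncomputable def colFactor (j : ℕ) : K :=
  (((j - μ.conj j : ℤ) : K) - w) / (((j - 1 - μ.conj j : ℤ) : K) - w)

noncomputable def rowFactor (i : ℕ) : K :=
  (((μ.row i - i : ℤ) : K) - w) / (((μ.row i + 1 - i : ℤ) : K) - w)

noncomputable def stepFactor (i : ℕ) : K :=
  (((μ.row i - i : ℤ) : K) - w) / (((μ.row (i + 1) - i : ℤ) : K) - w)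

noncomputable def removalRatio (a : ℕ) : K :=
  (∏ j ∈ range (μ.row a), μ.colFactor w (j + 1)) * (∏ i ∈ Ico 1 a, μ.rowFactor w i) /
    (((μ.row a + 1 - a : ℤ) : K) - w)

variable {w}

lemma prod_colFactor_Ico_row_succ_row (hw : ∀ n : ℤ, (n : K) ≠ w) {i : ℕ} (hi : 1 ≤ i) :
    ∏ j ∈ Ico (μ.row (i + 1)) (μ.row i), μ.colFactor w (j + 1) = μ.stepFactor w i := by
  set f : ℕ → K := fun k => ((k - i : ℤ) : K) - w
  have hconj : ∀ j ∈ Ico (μ.row (i + 1)) (μ.row i), μ.conj (j + 1) = i := by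
    intro j hj
    rw [mem_Ico] at hj
    have h1 := (μ.le_row_iff_le_conj hi (Nat.le_add_left 1 j)).1 (by omega)
    have h2 := (μ.le_row_iff_le_conj (Nat.le_add_left 1 i) (Nat.le_add_left 1 j)).not.1 (by omega)
    omega
  calc ∏ j ∈ Ico (μ.row (i + 1)) (μ.row i), μ.colFactor w (j + 1)
      = ∏ j ∈ Ico (μ.row (i + 1)) (μ.row i), f (j + 1) / f j := by
        refine prod_congr rfl fun j hj => ?_
        simp only [colFactor, f, hconj j hj]
        push_cast
        ring_nf
    _ = f (μ.row i) / f (μ.row (i + 1)) :=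
        prod_Ico_div_of_ne_zero f (fun k => sub_ne_zero.2 (hw _)) (μ.row_antitone_s2 (Nat.le_succ i))
    _ = μ.stepFactor w i := rfl

lemma prod_colFactor_eq_prod_stepFactor (hw : ∀ n : ℤ, (n : K) ≠ w) {a L : ℕ} (ha : 1 ≤ a)
    (haL : a ≤ L) :
    ∏ j ∈ Ico (μ.row L) (μ.row a), μ.colFactor w (j + 1) = ∏ i ∈ Ico a L, μ.stepFactor w i := by
  induction L, haL using Nat.le_induction with
  | base => simp
  | succ L haL ih =>
    rw [← prod_Ico_consecutive _ (μ.row_antitone_s2 (Nat.le_succ L)) (μ.row_antitone_s2 haL), ih,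
      prod_colFactor_Ico_row_succ_row μ hw (ha.trans haL), prod_Ico_succ_top haL, mul_comm]

lemma prod_rowFactor_div (hw : ∀ n : ℤ, (n : K) ≠ w) {a : ℕ} (ha : 1 ≤ a) :
    (∏ i ∈ Ico 1 a, μ.rowFactor w i) / (((μ.row a + 1 - a : ℤ) : K) - w) =
      (∏ i ∈ Ico 1 a, μ.stepFactor w i) / (((μ.row 1 + 1 - 1 : ℤ) : K) - w) := by
  set d : ℕ → K := fun i => ((μ.row i + 1 - i : ℤ) : K) - w
  have hd : ∀ i, d i ≠ 0 := fun i => sub_ne_zero.2 (hw _)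
  have hsplit : ∀ i, μ.rowFactor w i = μ.stepFactor w i * (d (i + 1) / d i) := by
    intro i
    have hd' : d (i + 1) = ((μ.row (i + 1) - i : ℤ) : K) - w := by simp only [d]; push_cast; ring
    rw [rowFactor, stepFactor, hd', div_mul_div_cancel₀ (sub_ne_zero.2 (hw _))]
  change (∏ i ∈ Ico 1 a, μ.rowFactor w i) / d a = (∏ i ∈ Ico 1 a, μ.stepFactor w i) / d 1
  rw [prod_congr rfl fun i _ => hsplit i, prod_mul_distrib, prod_Ico_div_of_ne_zero d hd ha]
  field_simp [hd a, hd 1]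

lemma descentRows_subset_Ico {L : ℕ} (hL : μ.row L = 0) : μ.descentRows ⊆ Ico 1 L := by
  rintro i ⟨hi, hdesc⟩
  have : i < L := not_le.mp fun h => by have := μ.row_antitone_s2 h; omega
  simp only [coe_Ico, Set.mem_Ico]
  exact ⟨hi, this⟩

lemma finprod_removable_mul_finprod_addable (hw : ∀ n : ℤ, (n : K) ≠ w) {L : ℕ}
    (hL : μ.row L = 0) :
    (∏ᶠ b ∈ μ.removable, ((res b : K) - w)) * ∏ᶠ g ∈ μ.addable, ((res g : K) - w)⁻¹ =
      (∏ i ∈ Ico 1 L, μ.stepFactor w i) / (((μ.row 1 + 1 - 1 : ℤ) : K) - w) := by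
  have hD : μ.descentRows.Finite := (Ico 1 L).finite_toSet.subset (μ.descentRows_subset_Ico hL)
  have h0 : 0 ∉ μ.descentRows := fun h => absurd h.1 (by omega)
  rw [removable_eq_image, addable_eq_image,
    finprod_mem_image fun a _ b _ h => congrArg Prod.fst h,
    finprod_mem_image fun a _ b _ h => by simpa using congrArg Prod.fst h,
    finprod_mem_insert _ h0 hD, mul_left_comm, ← finprod_mem_mul_distrib hD]
  have hstep : ∀ i ∈ μ.descentRows,
      ((res (i, μ.row i) : K) - w) * ((res (i + 1, μ.row (i + 1) + 1) : K) - w)⁻¹ =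
        μ.stepFactor w i := by
    intro i _
    rw [stepFactor, div_eq_mul_inv]
    congr 3
    simp only [res]
    push_cast
    ring
  have hsupp : ∀ i ∈ Function.mulSupport (μ.stepFactor w), i ∈ μ.descentRows ↔ i ∈ Ico 1 L := by
    intro i hi
    refine ⟨fun h => μ.descentRows_subset_Ico hL h, fun h => ⟨(mem_Ico.1 h).1, ?_⟩⟩
    refine lt_of_le_of_ne (μ.row_antitone_s2 (Nat.le_succ i)) fun heq => hi ?_
    rw [stepFactor, heq, div_self (sub_ne_zero.2 (hw _))]
  rw [finprod_mem_congr rfl hstep, finprod_mem_inter_mulSupport_eq' _ _ _ hsupp,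
    finprod_mem_coe_finset, div_eq_mul_inv, mul_comm]
  congr 3

theorem removalRatio_eq (hw : ∀ n : ℤ, (n : K) ≠ w) {a : ℕ} (ha : 1 ≤ a) :
    μ.removalRatio w a =
      (∏ᶠ b ∈ μ.removable, ((res b : K) - w)) * ∏ᶠ g ∈ μ.addable, ((res g : K) - w)⁻¹ := by
  obtain ⟨N, hN⟩ := μ.exists_row_eq_zero
  have haL := le_max_left a N
  have hL : μ.row (max a N) = 0 := hN _ (le_max_right a N)
  rw [finprod_removable_mul_finprod_addable μ hw hL, removalRatio, mul_div_assoc,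
    prod_rowFactor_div μ hw ha, range_eq_Ico, ← hL, prod_colFactor_eq_prod_stepFactor μ hw ha haL,
    ← mul_div_assoc, mul_comm (∏ i ∈ Ico a _, _), prod_Ico_consecutive _ ha haL]

end RemovalRatio

section Theta

variable {K : Type*} [Field K] {z : K} {lam nu : Ptn} (μ : Ptn) {α : ℕ × ℕ}

lemma finprod_ghook_left_div (hz : ∀ n : ℤ, (n : K) ≠ z) (hα : α ∈ lam.cells)
    (hnu : nu.cells = lam.cells \ {α}) :
    ∏ᶠ x ∈ μ.cells, ((ghook lam μ x : K) + z)⁻¹ / ((ghook nu μ x : K) + z)⁻¹ =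
      ∏ j ∈ range (μ.row α.1), μ.colFactor ((res α : K) + z) (j + 1) := by
  have hne : ∀ n : ℤ, (n : K) + z ≠ 0 := fun n h => hz (-n) (by push_cast; linear_combination -h)
  rw [μ.finprod_cells_eq_prod_row hα.1 fun x hx hx1 => ?_]
  · refine prod_congr rfl fun j _ => ?_
    have hlam : (lam.row α.1 : ℤ) = α.2 := by rw [row_fst_of_removal hα hnu]
    have hnu' : (nu.row α.1 : ℤ) = α.2 - 1 := by
      rw [row_of_removal hα hnu hα.1, if_pos rfl]; have := hα.2.1; omega
    rw [inv_div_inv, colFactor, ← neg_div_neg_eq]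
    simp only [ghook, res, hlam, hnu']
    push_cast
    ring_nf
  · rw [ghook, ghook, row_of_removal hα hnu hx.1, if_neg hx1, div_self (inv_ne_zero (hne _))]

lemma finprod_ghook_right_div (hz : ∀ n : ℤ, (n : K) ≠ z) (hα : α ∈ lam.cells)
    (hnu : nu.cells = lam.cells \ {α}) :
    ((ghook μ lam α : K) - z)⁻¹ *
        ∏ᶠ x ∈ nu.cells, ((ghook μ lam x : K) - z)⁻¹ / ((ghook μ nu x : K) - z)⁻¹ =
      (∏ i ∈ Ico 1 α.1, μ.rowFactor ((res α : K) + z) i) /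
        (((μ.row α.1 + 1 - α.1 : ℤ) : K) - ((res α : K) + z)) := by
  have hlam : (lam.conj α.2 : ℤ) = α.1 := by rw [conj_snd_of_removal hα hnu]
  have hnuc : nu.conj α.2 = α.1 - 1 := by rw [conj_of_removal hα hnu hα.2.1, if_pos rfl]
  rw [nu.finprod_cells_eq_prod_col hα.2.1 fun x hx hx2 => ?_]
  · rw [hnuc, prod_Ico_eq_prod_range, div_eq_mul_inv, mul_comm]
    congr 1
    · refine prod_congr rfl fun i _ => ?_
      have hnu' : (nu.conj α.2 : ℤ) = α.1 - 1 := by rw [hnuc]; have := hα.1; omega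
      rw [inv_div_inv, rowFactor, add_comm 1 i]
      simp only [ghook, res, hlam, hnu']
      push_cast
      ring_nf
    · simp only [ghook, res, hlam]
      push_cast
      ring_nf
  · rw [ghook, ghook, conj_of_removal hα hnu (nu.mem_cells_iff_le_conj.1 hx).2.1, if_neg hx2,
      div_self (inv_ne_zero (sub_ne_zero.2 (hz _)))]

end Theta

end Ptn

lemma RatFunc.intCast_ne_X {K : Type*} [Field K] (n : ℤ) : (n : RatFunc K) ≠ RatFunc.X := by
  intro h
  have := congrArg RatFunc.intDegree h
  rw [← map_intCast (RatFunc.C (K := K)), RatFunc.intDegree_C, RatFunc.intDegree_X] at this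
  exact zero_ne_one this

theorem theta2_div_theta2 {lam nu : Ptn} (μ : Ptn) {α : ℕ × ℕ} (hα : α ∈ lam.cells)
    (hnu : nu.cells = lam.cells \ {α}) :
    Theta2 lam μ / Theta2 nu μ = μ.removalRatio ((Ptn.res α : RatFunc ℚ) + RatFunc.X) α.1 := by
  have hlam : lam.cells = insert α nu.cells := by
    rw [hnu, Set.insert_sdiff_singleton, Set.insert_eq_of_mem hα]
  have hαnu : α ∉ nu.cells := by simp [hnu]
  rw [Theta2, Theta2, hlam, finprod_mem_insert _ hαnu nu.cells_finite, mul_div_mul_comm,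
    ← finprod_mem_div_distrib _ _ μ.cells_finite, mul_div_assoc,
    ← finprod_mem_div_distrib _ _ nu.cells_finite,
    Ptn.finprod_ghook_left_div μ RatFunc.intCast_ne_X hα hnu,
    Ptn.finprod_ghook_right_div μ RatFunc.intCast_ne_X hα hnu, Ptn.removalRatio, mul_div_assoc]

theorem statement2 (lam mu nu : Ptn) (alpha : ℕ × ℕ)
    (halpha : alpha ∈ lam.removable) (hnu : nu.cells = lam.cells \ {alpha}) :
    Theta2 lam mu / Theta2 nu mu =
      (∏ᶠ b ∈ mu.removable,
          ((Ptn.res b : RatFunc ℚ) - (Ptn.res alpha : RatFunc ℚ) - RatFunc.X)) *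
        ∏ᶠ g ∈ mu.addable,
          ((Ptn.res g : RatFunc ℚ) - (Ptn.res alpha : RatFunc ℚ) - RatFunc.X)⁻¹ := by
  obtain ⟨hα, -⟩ := halpha
  have hw : ∀ n : ℤ, (n : RatFunc ℚ) ≠ (Ptn.res alpha : RatFunc ℚ) + RatFunc.X := fun n h =>
    RatFunc.intCast_ne_X (n - Ptn.res alpha) (by push_cast; linear_combination h)
  rw [theta2_div_theta2 mu hα hnu, mu.removalRatio_eq hw hα.1]
  simp only [sub_sub]
end

section
/- Let λ be a partition, let α be a removable node of λ, and let μ = λ ∖ {α}. Then, as an identity in ℚ: (∏_{(i,j)∈μ} h^μ_{i,j}) / (∏_{(i,j)∈λ} h^λ_{i,j}) = ∏_{β∈R(μ)} (res(β) − res(α)) · ∏_{γ∈A(μ), γ≠α} (res(γ) − res(α))^{-1}, and this common value also equals ∏_{β∈R(μ)} (res(α) − res(β)) · ∏_{γ∈A(μ), γ≠α} (res(α) − res(γ))^{-1}. -/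
open scoped BigOperators

/-!
Deleting `α = (r, c)` changes only the hooks in row `r` and column `c`, each of which drops by
one, and `α` itself has hook `1` in `λ`. In row `r` the hook of `(r, j)` in `λ` is
`c - r + λ̂_j - j + 1`, so along a run of columns of equal length the ratios telescope: what
survives is one factor at the last column of the run, where `μ` has a removable node, and one at
the first, where `μ` has an addable node, and these factors are exactly the residue differences
with `α`. Column `c` is the same computation for the conjugate partitions, under which residues
change sign. The two sign conventions agree because in each half the removable and the addable
nodes are equinumerous.
-/

section Runs

open Finset

variable (n : ℕ) (P : ℕ → Prop) [DecidablePred P]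

/- `P j` marks a break between `j` and `j + 1`; `runEnds` and `runStarts` are the last and the
first elements of the maximal unbroken runs of `[1, n]`. -/
def runEnds : Finset ℕ := (Icc 1 n).filter fun j => j = n ∨ P j

def runStarts : Finset ℕ := (Icc 1 n).filter fun j => j = 1 ∨ P (j - 1)

theorem filter_not_runStarts_eq_image :
    (Icc 1 n).filter (fun j => ¬(j = 1 ∨ P (j - 1))) =
      ((Icc 1 n).filter fun j => ¬(j = n ∨ P j)).image (· + 1) := by
  ext k
  simp only [mem_filter, mem_image, mem_Icc, not_or]
  constructor
  · rintro ⟨⟨hk1, hkn⟩, hk, hP⟩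
    exact ⟨k - 1, ⟨⟨by omega, by omega⟩, by omega, hP⟩, by omega⟩
  · rintro ⟨j, ⟨⟨hj1, hjn⟩, hjn', hP⟩, rfl⟩
    exact ⟨⟨by omega, by omega⟩, by omega, by simpa using hP⟩

theorem card_runEnds : #(runEnds n P) = #(runStarts n P) := by
  have hE := card_filter_add_card_filter_not (s := Icc 1 n) (p := fun j => j = n ∨ P j)
  have hS := card_filter_add_card_filter_not (s := Icc 1 n) (p := fun j => j = 1 ∨ P (j - 1))
  rw [filter_not_runStarts_eq_image, card_image_of_injective _ (add_left_injective 1)] at hS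
  rw [runEnds, runStarts]
  omega

/-- Telescoping along the runs: within a run `g (j + 1) = f j`, so only the last `f` and the first
`g` of each run survive. -/
theorem prod_runEnds_mul_prod {M : Type*} [CommMonoid M] (f g : ℕ → M)
    (hfg : ∀ j ∈ Ico 1 n, ¬P j → g (j + 1) = f j) :
    (∏ j ∈ runEnds n P, f j) * ∏ j ∈ Icc 1 n, g j =
      (∏ j ∈ runStarts n P, g j) * ∏ j ∈ Icc 1 n, f j := by
  have hshift : ∏ j ∈ ((Icc 1 n).filter fun j => ¬(j = n ∨ P j)).image (· + 1), g j =
      ∏ j ∈ (Icc 1 n).filter (fun j => ¬(j = n ∨ P j)), f j := by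
    rw [prod_image fun _ _ _ _ => Nat.add_right_cancel]
    refine prod_congr rfl fun j hj => ?_
    simp only [mem_filter, mem_Icc, not_or] at hj
    exact hfg j (mem_Ico.2 ⟨hj.1.1, by omega⟩) hj.2.2
  rw [← prod_filter_mul_prod_filter_not (Icc 1 n) (fun j => j = n ∨ P j) f,
    ← prod_filter_mul_prod_filter_not (Icc 1 n) (fun j => j = 1 ∨ P (j - 1)) g,
    filter_not_runStarts_eq_image, hshift, runEnds, runStarts]
  exact mul_left_comm _ _ _

theorem prod_div_eq_runEnds_div_runStarts {K : Type*} [Field K] (f g : ℕ → K)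
    (hg : ∀ j ∈ Icc 1 n, g j ≠ 0) (hfg : ∀ j ∈ Ico 1 n, ¬P j → g (j + 1) = f j) :
    ∏ j ∈ Icc 1 n, f j / g j = (∏ j ∈ runEnds n P, f j) / ∏ j ∈ runStarts n P, g j := by
  have hstarts : ∏ j ∈ runStarts n P, g j ≠ 0 :=
    prod_ne_zero_iff.2 fun j hj => hg j (mem_filter.1 hj).1
  rw [prod_div_distrib, div_eq_div_iff (prod_ne_zero_iff.2 hg) hstarts]
  linear_combination -prod_runEnds_mul_prod n P f g hfg

end Runs

section FinprodRatio

variable {ι κ K : Type*} [Field K]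

noncomputable def finprodRatio (R A : Set ι) (f : ι → K) : K :=
  (∏ᶠ b ∈ R, f b) * ∏ᶠ g ∈ A, (f g)⁻¹

theorem finprodRatio_union {R₁ R₂ A₁ A₂ : Set ι} (hR : Disjoint R₁ R₂) (hA : Disjoint A₁ A₂)
    (hR₁ : R₁.Finite) (hR₂ : R₂.Finite) (hA₁ : A₁.Finite) (hA₂ : A₂.Finite) (f : ι → K) :
    finprodRatio (R₁ ∪ R₂) (A₁ ∪ A₂) f = finprodRatio R₁ A₁ f * finprodRatio R₂ A₂ f := by
  rw [finprodRatio, finprodRatio, finprodRatio, finprod_mem_union hR hR₁ hR₂,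
    finprod_mem_union hA hA₁ hA₂]
  ring

theorem finprodRatio_neg {R A : Set ι} (hR : R.Finite) (hA : A.Finite) (hcard : R.ncard = A.ncard)
    (f : ι → K) : finprodRatio R A (fun x => -f x) = finprodRatio R A f := by
  rw [Set.ncard_eq_toFinset_card R hR, Set.ncard_eq_toFinset_card A hA] at hcard
  simp only [finprodRatio, finprod_mem_eq_finite_toFinset_prod _ hR,
    finprod_mem_eq_finite_toFinset_prod _ hA, inv_neg, Finset.prod_neg, hcard]
  rw [mul_mul_mul_comm, ← mul_pow, neg_one_mul, neg_neg, one_pow, one_mul]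

theorem finprodRatio_image {e : ι → κ} {R A : Set ι} (hR : Set.InjOn e R) (hA : Set.InjOn e A)
    (f : κ → K) : finprodRatio (e '' R) (e '' A) f = finprodRatio R A (f ∘ e) := by
  rw [finprodRatio, finprodRatio, finprod_mem_image hR, finprod_mem_image hA]
  rfl

end FinprodRatio

namespace Ptn

theorem mem_cells_s3 {p : Ptn} {a b : ℕ} : (a, b) ∈ p.cells ↔ 1 ≤ a ∧ 1 ≤ b ∧ b ≤ p.row a :=
  Iff.rfl

theorem row_antitone_s3 (p : Ptn) : Antitone p.row :=
  fun _ _ h => p.antitone (Nat.sub_le_sub_right h 1)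

theorem le_row_iff_mem_cells (p : Ptn) {i j : ℕ} (hi : 1 ≤ i) (hj : 1 ≤ j) :
    j ≤ p.row i ↔ (i, j) ∈ p.cells := by
  simp [mem_cells_s3, hi, hj]

theorem lt_conj_iff (p : Ptn) {j : ℕ} (hj : 1 ≤ j) (k : ℕ) : k < p.conj j ↔ j ≤ p.part k := by
  classical
  have hex : ∃ n, p.part n < j := by
    obtain ⟨N, hN⟩ := p.finite_support
    exact ⟨N, by rw [hN N le_rfl]; omega⟩
  have hset : {k | j ≤ p.part k} = Set.Iio (Nat.find hex) := by
    ext m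
    simp only [Set.mem_ofPred_eq, Set.mem_Iio, Nat.lt_find_iff, not_lt]
    exact ⟨fun hm n hn => hm.trans (p.antitone hn), fun hm => hm m le_rfl⟩
  rw [conj, hset, ← Finset.coe_Iio, Set.ncard_coe_finset, Nat.card_Iio]
  exact (Set.ext_iff.1 hset k).symm

theorem le_conj_iff_mem_cells (p : Ptn) {i j : ℕ} (hi : 1 ≤ i) (hj : 1 ≤ j) :
    i ≤ p.conj j ↔ (i, j) ∈ p.cells := by
  rw [mem_cells_s3, row, ← p.lt_conj_iff hj]
  omega

theorem conj_antitone (p : Ptn) {j j' : ℕ} (hj : 1 ≤ j) (h : j ≤ j') : p.conj j' ≤ p.conj j := by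
  by_contra! hlt
  have := (p.lt_conj_iff (hj.trans h) _).1 hlt
  exact lt_irrefl _ ((p.lt_conj_iff hj _).2 (h.trans this))

theorem one_le_hook (p : Ptn) {x : ℕ × ℕ} (hx : x ∈ p.cells) : 1 ≤ p.hook x := by
  obtain ⟨i, j⟩ := x
  have hconj := (p.le_conj_iff_mem_cells hx.1 hx.2.1).2 hx
  have hrow := hx.2.2
  dsimp only at hconj hrow
  simp only [hook, ghook]
  omega

theorem cells_finite_s3 (p : Ptn) : p.cells.Finite := by
  refine ((Set.finite_Icc 1 (p.conj 1)).prod (Set.finite_Icc 1 (p.row 1))).subset ?_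
  rintro ⟨i, j⟩ hx
  have hconj := (p.le_conj_iff_mem_cells hx.1 hx.2.1).2 hx
  have := p.conj_antitone le_rfl hx.2.1
  have := p.row_antitone_s3 hx.1
  simp only [Set.mem_prod, Set.mem_Icc]
  exact ⟨⟨hx.1, by omega⟩, hx.2.1, by have := hx.2.2; omega⟩

theorem removable_finite (p : Ptn) : p.removable.Finite :=
  p.cells_finite_s3.subset fun _ hx => hx.1

noncomputable def transpose (p : Ptn) : Ptn where
  part k := p.conj (k + 1)
  antitone _ _ h := p.conj_antitone (Nat.le_add_left 1 _) (Nat.succ_le_succ h)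
  finite_support := ⟨p.part 0, fun k hk => Nat.eq_zero_of_not_pos fun hpos => by
    have := (p.lt_conj_iff (Nat.succ_pos k) 0).1 hpos
    omega⟩

theorem row_transpose (p : Ptn) {j : ℕ} (hj : 1 ≤ j) : p.transpose.row j = p.conj j := by
  simp only [row, transpose, Nat.sub_add_cancel hj]

theorem mem_cells_transpose {p : Ptn} {x : ℕ × ℕ} : x ∈ p.transpose.cells ↔ x.swap ∈ p.cells := by
  obtain ⟨a, b⟩ := x
  rw [Prod.swap_prod_mk]
  refine ⟨fun ⟨ha, hb, h⟩ => ?_, fun h => ⟨h.2.1, h.1, ?_⟩⟩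
  · rwa [row_transpose p ha, p.le_conj_iff_mem_cells hb ha] at h
  · rw [row_transpose p h.2.1, p.le_conj_iff_mem_cells h.1 h.2.1]
    exact h

theorem cells_transpose (p : Ptn) : p.transpose.cells = Prod.swap ⁻¹' p.cells :=
  Set.ext fun _ => mem_cells_transpose

theorem conj_transpose (p : Ptn) {i : ℕ} (hi : 1 ≤ i) : p.transpose.conj i = p.row i := by
  refine eq_of_forall_le_iff fun j => ?_
  rcases j.eq_zero_or_pos with rfl | hj
  · simp
  rw [p.transpose.le_conj_iff_mem_cells hj hi, mem_cells_transpose, Prod.swap_prod_mk,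
    p.le_row_iff_mem_cells hi hj]

theorem hook_transpose (p : Ptn) {a b : ℕ} (ha : 1 ≤ a) (hb : 1 ≤ b) :
    p.transpose.hook (b, a) = p.hook (a, b) := by
  simp only [hook, ghook, row_transpose p hb, conj_transpose p ha]
  ring

theorem exists_cells_eq_preimage_swap_iff (S : Set (ℕ × ℕ)) :
    (∃ m : Ptn, m.cells = Prod.swap ⁻¹' S) ↔ ∃ m : Ptn, m.cells = S :=
  ⟨fun ⟨m, hm⟩ => ⟨m.transpose, by
      rw [cells_transpose, hm, ← Set.preimage_comp, Prod.swap_swap_eq, Set.preimage_id]⟩,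
    fun ⟨m, hm⟩ => ⟨m.transpose, by rw [cells_transpose, hm]⟩⟩

theorem preimage_swap_singleton (x : ℕ × ℕ) : Prod.swap ⁻¹' {x.swap} = {x} := by
  ext y
  simp [Prod.swap_eq_iff_eq_swap]

theorem removable_transpose (p : Ptn) : p.transpose.removable = Prod.swap ⁻¹' p.removable := by
  ext x
  simp only [removable, Set.mem_ofPred_eq, Set.mem_preimage, cells_transpose,
    ← exists_cells_eq_preimage_swap_iff (p.cells \ {x.swap}), Set.preimage_sdiff,
    preimage_swap_singleton]

theorem addable_transpose (p : Ptn) : p.transpose.addable = Prod.swap ⁻¹' p.addable := by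
  ext x
  simp only [addable, Set.mem_ofPred_eq, Set.mem_preimage, cells_transpose,
    ← exists_cells_eq_preimage_swap_iff (p.cells ∪ {x.swap}), Set.preimage_union,
    preimage_swap_singleton]

end Ptn

namespace Ptn

def IsRemoval (lam mu : Ptn) (x : ℕ × ℕ) : Prop :=
  x ∈ lam.cells ∧ mu.cells = lam.cells \ {x}

namespace IsRemoval

variable {lam mu : Ptn} {r c : ℕ}

theorem one_le_fst (h : IsRemoval lam mu (r, c)) : 1 ≤ r := h.1.1

theorem one_le_snd (h : IsRemoval lam mu (r, c)) : 1 ≤ c := h.1.2.1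

theorem mem_cells_iff (h : IsRemoval lam mu (r, c)) {a b : ℕ} :
    (a, b) ∈ mu.cells ↔ (a, b) ∈ lam.cells ∧ ¬(a = r ∧ b = c) := by
  rw [h.2, Set.mem_sdiff, Set.mem_singleton_iff, Prod.mk.injEq]

theorem row_eq (h : IsRemoval lam mu (r, c)) : lam.row r = c := by
  obtain ⟨hr, hc, hle⟩ := mem_cells_s3.1 h.1
  by_contra hne
  have hnext : (r, c + 1) ∈ mu.cells :=
    h.mem_cells_iff.2 ⟨mem_cells_s3.2 ⟨hr, by omega, by omega⟩, by omega⟩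
  have : (r, c) ∈ mu.cells := mem_cells_s3.2 ⟨hr, hc, by have := (mem_cells_s3.1 hnext).2.2; omega⟩
  exact (h.mem_cells_iff.1 this).2 ⟨rfl, rfl⟩

theorem row_eq_sub_one (h : IsRemoval lam mu (r, c)) : mu.row r = c - 1 := by
  refine eq_of_forall_le_iff fun j => ?_
  rcases j.eq_zero_or_pos with rfl | hj
  · simp
  rw [mu.le_row_iff_mem_cells h.one_le_fst hj, h.mem_cells_iff,
    ← lam.le_row_iff_mem_cells h.one_le_fst hj, h.row_eq]
  omega

theorem row_eq_of_ne (h : IsRemoval lam mu (r, c)) {i : ℕ} (hi : 1 ≤ i) (hir : i ≠ r) :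
    mu.row i = lam.row i := by
  refine eq_of_forall_le_iff fun j => ?_
  rcases j.eq_zero_or_pos with rfl | hj
  · simp
  rw [mu.le_row_iff_mem_cells hi hj, h.mem_cells_iff, ← lam.le_row_iff_mem_cells hi hj]
  simp [hir]

theorem transpose (h : IsRemoval lam mu (r, c)) : IsRemoval lam.transpose mu.transpose (c, r) := by
  refine ⟨mem_cells_transpose.2 h.1, ?_⟩
  rw [cells_transpose, cells_transpose, h.2, Set.preimage_sdiff]
  exact congrArg _ (preimage_swap_singleton (c, r))

theorem conj_eq (h : IsRemoval lam mu (r, c)) : lam.conj c = r := by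
  rw [← row_transpose lam h.one_le_snd]
  exact h.transpose.row_eq

theorem conj_eq_sub_one (h : IsRemoval lam mu (r, c)) : mu.conj c = r - 1 := by
  rw [← row_transpose mu h.one_le_snd]
  exact h.transpose.row_eq_sub_one

theorem conj_eq_of_ne (h : IsRemoval lam mu (r, c)) {j : ℕ} (hj : 1 ≤ j) (hjc : j ≠ c) :
    mu.conj j = lam.conj j := by
  rw [← row_transpose mu hj, ← row_transpose lam hj]
  exact h.transpose.row_eq_of_ne hj hjc

theorem le_conj_of_lt (h : IsRemoval lam mu (r, c)) {j : ℕ} (hj : 1 ≤ j) (hjc : j < c) :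
    r ≤ mu.conj j :=
  (mu.le_conj_iff_mem_cells h.one_le_fst hj).2
    (mem_cells_s3.2 ⟨h.one_le_fst, hj, by rw [h.row_eq_sub_one]; omega⟩)

theorem hook_eq_one (h : IsRemoval lam mu (r, c)) : lam.hook (r, c) = 1 := by
  simp only [hook, ghook, h.row_eq, h.conj_eq]
  ring

end IsRemoval

noncomputable def withPart (p : Ptn) (k v : ℕ) (hlt : ∀ i < k, v ≤ p.part i)
    (hgt : ∀ i, k < i → p.part i ≤ v) : Ptn where
  part := Function.update p.part k v
  antitone a b hab := by
    simp only [Function.update_apply]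
    split_ifs with hb ha ha
    · exact le_rfl
    · exact hlt a (by omega)
    · exact hgt b (by omega)
    · exact p.antitone hab
  finite_support := by
    obtain ⟨N, hN⟩ := p.finite_support
    exact ⟨N + k + 1, fun i hi => by rw [Function.update_of_ne (by omega)]; exact hN i (by omega)⟩

theorem mem_cells_withPart {p : Ptn} {k v : ℕ} {hlt} {hgt} {a b : ℕ} :
    (a, b) ∈ (p.withPart k v hlt hgt).cells ↔
      1 ≤ a ∧ 1 ≤ b ∧ b ≤ if a - 1 = k then v else p.row a := by
  simp only [mem_cells_s3, row, withPart, Function.update_apply]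

theorem mem_removable_iff (p : Ptn) (x : ℕ × ℕ) :
    x ∈ p.removable ↔ 1 ≤ x.1 ∧ 1 ≤ x.2 ∧ p.row x.1 = x.2 ∧ p.row (x.1 + 1) < x.2 := by
  obtain ⟨a, b⟩ := x
  dsimp only
  constructor
  · rintro ⟨hx, m, hm⟩
    have h : IsRemoval p m (a, b) := ⟨hx, hm⟩
    have hnext := h.row_eq_of_ne (i := a + 1) (by omega) (by omega)
    have hanti := m.row_antitone_s3 (Nat.le_add_right a 1)
    have hrow := h.row_eq_sub_one
    have hb := h.one_le_snd
    refine ⟨h.one_le_fst, hb, h.row_eq, ?_⟩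
    omega
  · rintro ⟨ha, hb, hrow, hnext⟩
    dsimp only [row] at hrow hnext
    refine ⟨mem_cells_s3.2 ⟨ha, hb, hrow.ge⟩,
      p.withPart (a - 1) (b - 1) (fun i hi => ?_) (fun i hi => ?_), ?_⟩
    · have := p.antitone (show i ≤ a - 1 by omega)
      omega
    · have := p.antitone (show a ≤ i by omega)
      simp only [Nat.add_sub_cancel] at hnext
      omega
    · ext ⟨i, j⟩
      rw [mem_cells_withPart, Set.mem_sdiff, Set.mem_singleton_iff, mem_cells_s3, Prod.mk.injEq]
      split_ifs with hi
      · have : p.row i = p.part (a - 1) := by rw [row, hi]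
        omega
      · omega

theorem mem_addable_iff (p : Ptn) (x : ℕ × ℕ) :
    x ∈ p.addable ↔ 1 ≤ x.1 ∧ x.2 = p.row x.1 + 1 ∧ (x.1 = 1 ∨ x.2 ≤ p.row (x.1 - 1)) := by
  obtain ⟨a, b⟩ := x
  dsimp only
  constructor
  · rintro ⟨hx, m, hm⟩
    have h : IsRemoval m p (a, b) :=
      ⟨by rw [hm]; exact Or.inr rfl,
        by rw [hm, Set.union_sdiff_right, Set.sdiff_singleton_eq_self hx]⟩
    have hrow := h.row_eq_sub_one
    have ha := h.one_le_fst
    have hb := h.one_le_snd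
    refine ⟨ha, by omega, or_iff_not_imp_left.2 fun ha1 => ?_⟩
    have hprev := h.row_eq_of_ne (i := a - 1) (by omega) (by omega)
    have hanti := m.row_antitone_s3 (Nat.sub_le a 1)
    have := h.row_eq
    omega
  · rintro ⟨ha, hb, hprev⟩
    dsimp only [row] at hb hprev
    refine ⟨fun hx => by have := (mem_cells_s3.1 hx).2.2; simp only [row] at this; omega,
      p.withPart (a - 1) b (fun i hi => ?_) (fun i hi => ?_), ?_⟩
    · have := p.antitone (show i ≤ a - 1 - 1 by omega)
      omega
    · have := p.antitone (show a - 1 ≤ i by omega)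
      omega
    · ext ⟨i, j⟩
      rw [mem_cells_withPart, Set.mem_union, Set.mem_singleton_iff, mem_cells_s3, Prod.mk.injEq]
      split_ifs with hi
      · have : p.row i = p.part (a - 1) := by rw [row, hi]
        omega
      · omega

theorem mem_removable_iff_conj (p : Ptn) (x : ℕ × ℕ) :
    x ∈ p.removable ↔ 1 ≤ x.1 ∧ 1 ≤ x.2 ∧ p.conj x.2 = x.1 ∧ p.conj (x.2 + 1) < x.1 := by
  obtain ⟨a, b⟩ := x
  have := p.transpose.mem_removable_iff (b, a)
  rw [removable_transpose, Set.mem_preimage, Prod.swap_prod_mk] at this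
  rw [this, and_left_comm]
  refine and_congr_right fun _ => and_congr_right fun hb => ?_
  dsimp only at hb ⊢
  rw [row_transpose p hb, row_transpose p (Nat.le_add_left 1 b)]

theorem mem_addable_iff_conj (p : Ptn) (x : ℕ × ℕ) :
    x ∈ p.addable ↔ 1 ≤ x.2 ∧ x.1 = p.conj x.2 + 1 ∧ (x.2 = 1 ∨ x.1 ≤ p.conj (x.2 - 1)) := by
  obtain ⟨a, b⟩ := x
  have := p.transpose.mem_addable_iff (b, a)
  rw [addable_transpose, Set.mem_preimage, Prod.swap_prod_mk] at this
  rw [this]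
  refine and_congr_right fun hb => ?_
  dsimp only at hb ⊢
  rw [row_transpose p hb]
  refine and_congr_right fun _ => or_congr_right' fun hb1 => ?_
  rw [row_transpose p (by omega)]

theorem addable_finite (p : Ptn) : p.addable.Finite := by
  refine ((Set.finite_Icc 1 (p.conj 1 + 1)).prod (Set.finite_Icc 1 (p.row 1 + 1))).subset ?_
  rintro ⟨i, j⟩ hx
  obtain ⟨hi, hj, -⟩ := (p.mem_addable_iff _).1 hx
  obtain ⟨hj1, hi', -⟩ := (p.mem_addable_iff_conj _).1 hx
  dsimp only at hi hj hj1 hi'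
  have := p.conj_antitone le_rfl hj1
  have := p.row_antitone_s3 hi
  simp only [Set.mem_prod, Set.mem_Icc]
  omega

end Ptn

namespace Ptn

open Finset

theorem sep_removable_transpose (p : Ptn) (r : ℕ) :
    {b ∈ p.transpose.removable | b.2 < r} = Prod.swap '' {b ∈ p.removable | b.1 < r} := by
  rw [removable_transpose, Set.image_swap_eq_preimage_swap]
  rfl

theorem sep_addable_transpose (p : Ptn) (r : ℕ) :
    {g ∈ p.transpose.addable | g.2 < r} = Prod.swap '' {g ∈ p.addable | g.1 < r} := by
  rw [addable_transpose, Set.image_swap_eq_preimage_swap]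
  rfl

theorem sep_addable_eq_image_runStarts (p : Ptn) (c : ℕ) :
    {g ∈ p.addable | g.2 < c} =
      ((runStarts (c - 1) fun j => p.conj (j + 1) ≠ p.conj j).image fun j => (p.conj j + 1, j) :
        Set (ℕ × ℕ)) := by
  ext ⟨i, j⟩
  simp only [Set.mem_ofPred_eq, mem_addable_iff_conj, runStarts, coe_image, Set.mem_image, mem_coe,
    mem_filter, mem_Icc, Prod.mk.injEq]
  constructor
  · rintro ⟨⟨hj, rfl, hprev⟩, hjc⟩
    refine ⟨j, ⟨⟨hj, by omega⟩, ?_⟩, rfl, rfl⟩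
    rcases hprev with hj1 | hle
    · exact Or.inl hj1
    · rw [Nat.sub_add_cancel hj]
      omega
  · rintro ⟨j, ⟨⟨hj1, hjc⟩, hbreak⟩, rfl, rfl⟩
    refine ⟨⟨hj1, rfl, ?_⟩, by omega⟩
    rcases hbreak with hj | hne
    · exact Or.inl hj
    · rw [Nat.sub_add_cancel hj1] at hne
      by_cases hj : j = 1
      · exact Or.inl hj
      · have := p.conj_antitone (j := j - 1) (by omega) (Nat.sub_le j 1)
        omega

namespace IsRemoval

variable {lam mu : Ptn} {r c : ℕ}

theorem sep_removable_eq_image_runEnds (h : IsRemoval lam mu (r, c)) :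
    {b ∈ mu.removable | b.2 < c} =
      ((runEnds (c - 1) fun j => mu.conj (j + 1) ≠ mu.conj j).image fun j => (mu.conj j, j) :
        Set (ℕ × ℕ)) := by
  ext ⟨i, j⟩
  simp only [Set.mem_ofPred_eq, mem_removable_iff_conj, runEnds, coe_image, Set.mem_image, mem_coe,
    mem_filter, mem_Icc, Prod.mk.injEq]
  constructor
  · rintro ⟨⟨hi, hj, hconj, hnext⟩, hjc⟩
    exact ⟨j, ⟨⟨hj, by omega⟩, Or.inr (by omega)⟩, hconj, rfl⟩
  · rintro ⟨j, ⟨⟨hj1, hjc⟩, hbreak⟩, rfl, rfl⟩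
    have hr := h.le_conj_of_lt hj1 (by omega)
    have := h.one_le_fst
    have hanti := mu.conj_antitone hj1 (Nat.le_add_right j 1)
    refine ⟨⟨by omega, hj1, rfl, ?_⟩, by omega⟩
    rcases hbreak with rfl | hne
    · have := h.conj_eq_sub_one
      rw [Nat.sub_add_cancel h.one_le_snd]
      omega
    · omega

theorem prod_hook_div_row (h : IsRemoval lam mu (r, c)) :
    ∏ j ∈ Icc 1 (c - 1), (mu.hook (r, j) : ℚ) / lam.hook (r, j) =
      finprodRatio {b ∈ mu.removable | b.2 < c} {g ∈ mu.addable | g.2 < c}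
        fun b => (res (r, c) : ℚ) - res b := by
  set f : ℕ → ℚ := fun j => (c : ℚ) - r + mu.conj j - j with hf
  have hhook : ∀ j ∈ Icc 1 (c - 1), (mu.hook (r, j) : ℚ) / lam.hook (r, j) = f j / (f j + 1) := by
    intro j hj
    have hj := mem_Icc.1 hj
    simp only [hook, ghook, h.row_eq_sub_one, h.row_eq, h.conj_eq_of_ne hj.1 (by omega : j ≠ c),
      hf]
    push_cast [h.one_le_snd]
    ring_nf
  have hpos : ∀ j ∈ Icc 1 (c - 1), f j + 1 ≠ 0 := fun j hj => by
    have hj := mem_Icc.1 hj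
    have : (r : ℚ) ≤ mu.conj j := by exact_mod_cast h.le_conj_of_lt hj.1 (by omega)
    have : (j : ℚ) + 1 ≤ c := by exact_mod_cast (by omega : j + 1 ≤ c)
    simp only [hf]
    linarith
  have hres : ∀ j, (res (r, c) : ℚ) - res (mu.conj j, j) = f j := fun j => by
    simp only [res, hf]; push_cast; ring
  have hres' : ∀ j, (res (r, c) : ℚ) - res (mu.conj j + 1, j) = f j + 1 := fun j => by
    simp only [res, hf]; push_cast; ring
  have htel := prod_div_eq_runEnds_div_runStarts (c - 1) (fun j => mu.conj (j + 1) ≠ mu.conj j)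
    f (f · + 1) hpos fun j _ hj => by simp only [hf, not_not.1 hj]; push_cast; ring
  rw [prod_congr rfl hhook, htel, finprodRatio, h.sep_removable_eq_image_runEnds,
    mu.sep_addable_eq_image_runStarts c, finprod_mem_coe_finset, finprod_mem_coe_finset,
    prod_image fun _ _ _ _ hab => congrArg Prod.snd hab,
    prod_image fun _ _ _ _ hab => congrArg Prod.snd hab, prod_inv_distrib, div_eq_mul_inv]
  simp only [hres, hres']

theorem ncard_sep_removable_snd (h : IsRemoval lam mu (r, c)) :
    {b ∈ mu.removable | b.2 < c}.ncard = {g ∈ mu.addable | g.2 < c}.ncard := by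
  rw [h.sep_removable_eq_image_runEnds, mu.sep_addable_eq_image_runStarts c,
    Set.ncard_coe_finset, Set.ncard_coe_finset,
    card_image_of_injective _ fun _ _ hab => congrArg Prod.snd hab,
    card_image_of_injective _ fun _ _ hab => congrArg Prod.snd hab, card_runEnds]

theorem prod_hook_div_col (h : IsRemoval lam mu (r, c)) :
    ∏ i ∈ Icc 1 (r - 1), (mu.hook (i, c) : ℚ) / lam.hook (i, c) =
      finprodRatio {b ∈ mu.removable | b.1 < r} {g ∈ mu.addable | g.1 < r}
        fun b => (res b : ℚ) - res (r, c) := by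
  have hT := h.transpose.prod_hook_div_row
  rw [sep_removable_transpose, sep_addable_transpose,
    finprodRatio_image Prod.swap_injective.injOn Prod.swap_injective.injOn] at hT
  calc ∏ i ∈ Icc 1 (r - 1), (mu.hook (i, c) : ℚ) / lam.hook (i, c)
      = ∏ i ∈ Icc 1 (r - 1), (mu.transpose.hook (c, i) : ℚ) / lam.transpose.hook (c, i) :=
        prod_congr rfl fun i hi => by
          rw [hook_transpose mu (mem_Icc.1 hi).1 h.one_le_snd,
            hook_transpose lam (mem_Icc.1 hi).1 h.one_le_snd]
    _ = _ := by
        rw [hT]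
        congr 1
        funext b
        simp only [Function.comp_apply, Prod.fst_swap, Prod.snd_swap, res]
        push_cast
        ring

theorem ncard_sep_removable_fst (h : IsRemoval lam mu (r, c)) :
    {b ∈ mu.removable | b.1 < r}.ncard = {g ∈ mu.addable | g.1 < r}.ncard := by
  have hT := h.transpose.ncard_sep_removable_snd
  rwa [sep_removable_transpose, sep_addable_transpose,
    Set.ncard_image_of_injective _ Prod.swap_injective,
    Set.ncard_image_of_injective _ Prod.swap_injective] at hT


theorem finprod_hook_div (h : IsRemoval lam mu (r, c)) :
    (∏ᶠ x ∈ mu.cells, (mu.hook x : ℚ)) / ∏ᶠ x ∈ lam.cells, (lam.hook x : ℚ) =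
      (∏ j ∈ Icc 1 (c - 1), (mu.hook (r, j) : ℚ) / lam.hook (r, j)) *
        ∏ i ∈ Icc 1 (r - 1), (mu.hook (i, c) : ℚ) / lam.hook (i, c) := by
  have hlam : lam.cells = insert (r, c) mu.cells := by
    rw [h.2, Set.insert_sdiff_singleton, Set.insert_eq_of_mem h.1]
  have hnot : (r, c) ∉ mu.cells := fun hx => (h.mem_cells_iff.1 hx).2 ⟨rfl, rfl⟩
  have hoff : ∏ᶠ x ∈ mu.cells \ {x | x.1 = r ∨ x.2 = c}, (mu.hook x : ℚ) / lam.hook x = 1 := by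
    refine finprod_mem_eq_one_of_forall_eq_one fun ⟨a, b⟩ ⟨hx, hoff⟩ => ?_
    simp only [Set.mem_ofPred_eq, not_or] at hoff
    have hlam_hook := lam.one_le_hook (h.mem_cells_iff.1 hx).1
    have : mu.hook (a, b) = lam.hook (a, b) := by
      simp only [hook, ghook, h.row_eq_of_ne hx.1 hoff.1, h.conj_eq_of_ne hx.2.1 hoff.2]
    rw [this, div_self (Int.cast_ne_zero.2 (by omega))]
  have hcross : mu.cells ∩ {x | x.1 = r ∨ x.2 = c} =
      (fun j => (r, j)) '' Set.Icc 1 (c - 1) ∪ (fun i => (i, c)) '' Set.Icc 1 (r - 1) := by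
    ext ⟨a, b⟩
    simp only [Set.mem_inter_iff, Set.mem_union, Set.mem_image, Set.mem_Icc, Prod.mk.injEq,
      Set.mem_ofPred_eq]
    constructor
    · rintro ⟨hx, rfl | rfl⟩
      · exact Or.inl ⟨b, ⟨hx.2.1, h.row_eq_sub_one ▸ hx.2.2⟩, rfl, rfl⟩
      · exact Or.inr ⟨a, ⟨hx.1, h.conj_eq_sub_one ▸ (mu.le_conj_iff_mem_cells hx.1 hx.2.1).2 hx⟩,
          rfl, rfl⟩
    · rintro (⟨j, ⟨hj1, hjc⟩, rfl, rfl⟩ | ⟨i, ⟨hi1, hir⟩, rfl, rfl⟩)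
      · exact ⟨mem_cells_s3.2 ⟨h.one_le_fst, hj1, h.row_eq_sub_one ▸ hjc⟩, Or.inl rfl⟩
      · exact ⟨(mu.le_conj_iff_mem_cells hi1 h.one_le_snd).1 (h.conj_eq_sub_one ▸ hir),
          Or.inr rfl⟩
  have hdisj : Disjoint ((fun j => (r, j)) '' Set.Icc 1 (c - 1))
      ((fun i => (i, c)) '' Set.Icc 1 (r - 1)) := by
    refine Set.disjoint_left.2 ?_
    rintro _ ⟨j, hj, rfl⟩ ⟨i, hi, heq⟩
    simp only [Set.mem_Icc, Prod.mk.injEq] at hj hi heq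
    omega
  rw [hlam, finprod_mem_insert _ hnot mu.cells_finite_s3, h.hook_eq_one, Int.cast_one, one_mul,
    ← finprod_mem_div_distrib _ _ mu.cells_finite_s3,
    ← finprod_mem_inter_mul_sdiff {x | x.1 = r ∨ x.2 = c} mu.cells_finite_s3, hoff, mul_one, hcross,
    finprod_mem_union hdisj ((Set.finite_Icc _ _).image _) ((Set.finite_Icc _ _).image _),
    finprod_mem_image fun _ _ _ _ hab => congrArg Prod.snd hab,
    finprod_mem_image fun _ _ _ _ hab => congrArg Prod.fst hab,
    ← coe_Icc, finprod_mem_coe_finset, ← coe_Icc, finprod_mem_coe_finset]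

theorem removable_eq_union (h : IsRemoval lam mu (r, c)) :
    mu.removable = {b ∈ mu.removable | b.2 < c} ∪ {b ∈ mu.removable | b.1 < r} := by
  refine Set.ext fun b => ⟨fun hb => ?_, fun hb => hb.elim And.left And.left⟩
  by_cases hbc : b.2 < c
  · exact Or.inl ⟨hb, hbc⟩
  · obtain ⟨hi, hj, hconj, -⟩ := (mu.mem_removable_iff_conj b).1 hb
    have := mu.conj_antitone h.one_le_snd (not_lt.1 hbc)
    have := h.conj_eq_sub_one
    have := h.one_le_fst
    exact Or.inr ⟨hb, by omega⟩

theorem disjoint_sep_removable (h : IsRemoval lam mu (r, c)) :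
    Disjoint {b ∈ mu.removable | b.2 < c} {b ∈ mu.removable | b.1 < r} := by
  refine Set.disjoint_left.2 fun b ⟨hb, hbc⟩ ⟨_, hbr⟩ => ?_
  obtain ⟨-, -, -, hnext⟩ := (mu.mem_removable_iff_conj b).1 hb
  have := mu.conj_antitone (Nat.le_add_left 1 b.2) (show b.2 + 1 ≤ c by omega)
  have := h.conj_eq_sub_one
  omega

theorem addable_sdiff_eq_union (h : IsRemoval lam mu (r, c)) :
    mu.addable \ {(r, c)} = {g ∈ mu.addable | g.2 < c} ∪ {g ∈ mu.addable | g.1 < r} := by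
  ext ⟨i, j⟩
  simp only [Set.mem_sdiff, Set.mem_singleton_iff, Set.mem_union, Set.mem_ofPred_eq,
    Prod.mk.injEq]
  constructor
  · rintro ⟨hg, hne⟩
    by_cases hjc : j < c
    · exact Or.inl ⟨hg, hjc⟩
    obtain ⟨hj, hi, hprev⟩ := (mu.mem_addable_iff_conj _).1 hg
    dsimp only at hj hi hprev
    have := h.conj_eq_sub_one
    have := h.one_le_fst
    have := h.one_le_snd
    refine Or.inr ⟨hg, ?_⟩
    rcases (not_lt.1 hjc).eq_or_lt with rfl | hcj
    · exact absurd ⟨by omega, rfl⟩ hne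
    · have := mu.conj_antitone h.one_le_snd (show c ≤ j - 1 by omega)
      omega
  · rintro (⟨hg, hjc⟩ | ⟨hg, hir⟩)
    · exact ⟨hg, by omega⟩
    · exact ⟨hg, by omega⟩

theorem disjoint_sep_addable (h : IsRemoval lam mu (r, c)) :
    Disjoint {g ∈ mu.addable | g.2 < c} {g ∈ mu.addable | g.1 < r} := by
  refine Set.disjoint_left.2 fun g ⟨hg, hgc⟩ ⟨_, hgr⟩ => ?_
  obtain ⟨hj, hi, -⟩ := (mu.mem_addable_iff_conj g).1 hg
  have := h.le_conj_of_lt hj hgc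
  omega

theorem prod_hook_div_row' (h : IsRemoval lam mu (r, c)) :
    ∏ j ∈ Icc 1 (c - 1), (mu.hook (r, j) : ℚ) / lam.hook (r, j) =
      finprodRatio {b ∈ mu.removable | b.2 < c} {g ∈ mu.addable | g.2 < c}
        fun b => (res b : ℚ) - res (r, c) := by
  rw [h.prod_hook_div_row, ← finprodRatio_neg (mu.removable_finite.subset (Set.sep_subset _ _))
    (mu.addable_finite.subset (Set.sep_subset _ _)) h.ncard_sep_removable_snd]
  simp only [neg_sub]

theorem prod_hook_div_col' (h : IsRemoval lam mu (r, c)) :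
    ∏ i ∈ Icc 1 (r - 1), (mu.hook (i, c) : ℚ) / lam.hook (i, c) =
      finprodRatio {b ∈ mu.removable | b.1 < r} {g ∈ mu.addable | g.1 < r}
        fun b => (res (r, c) : ℚ) - res b := by
  rw [h.prod_hook_div_col, ← finprodRatio_neg (mu.removable_finite.subset (Set.sep_subset _ _))
    (mu.addable_finite.subset (Set.sep_subset _ _)) h.ncard_sep_removable_fst]
  simp only [neg_sub]

theorem finprodRatio_eq_mul (h : IsRemoval lam mu (r, c)) (f : ℕ × ℕ → ℚ) :
    finprodRatio mu.removable (mu.addable \ {(r, c)}) f =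
      finprodRatio {b ∈ mu.removable | b.2 < c} {g ∈ mu.addable | g.2 < c} f *
        finprodRatio {b ∈ mu.removable | b.1 < r} {g ∈ mu.addable | g.1 < r} f := by
  conv_lhs => rw [h.removable_eq_union, h.addable_sdiff_eq_union]
  exact finprodRatio_union h.disjoint_sep_removable h.disjoint_sep_addable
    (mu.removable_finite.subset (Set.sep_subset _ _))
    (mu.removable_finite.subset (Set.sep_subset _ _))
    (mu.addable_finite.subset (Set.sep_subset _ _))
    (mu.addable_finite.subset (Set.sep_subset _ _)) f

end IsRemoval

end Ptn

theorem statement3 (lam mu : Ptn) (alpha : ℕ × ℕ)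
    (halpha : alpha ∈ lam.removable) (hmu : mu.cells = lam.cells \ {alpha}) :
    (∏ᶠ x ∈ mu.cells, (mu.hook x : ℚ)) / (∏ᶠ x ∈ lam.cells, (lam.hook x : ℚ)) =
        (∏ᶠ b ∈ mu.removable, ((Ptn.res b : ℚ) - (Ptn.res alpha : ℚ))) *
          (∏ᶠ g ∈ (mu.addable \ {alpha}), ((Ptn.res g : ℚ) - (Ptn.res alpha : ℚ))⁻¹) ∧
      (∏ᶠ x ∈ mu.cells, (mu.hook x : ℚ)) / (∏ᶠ x ∈ lam.cells, (lam.hook x : ℚ)) =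
        (∏ᶠ b ∈ mu.removable, ((Ptn.res alpha : ℚ) - (Ptn.res b : ℚ))) *
          (∏ᶠ g ∈ (mu.addable \ {alpha}), ((Ptn.res alpha : ℚ) - (Ptn.res g : ℚ))⁻¹) := by
  obtain ⟨r, c⟩ := alpha
  have h : Ptn.IsRemoval lam mu (r, c) := ⟨halpha.1, hmu⟩
  rw [h.finprod_hook_div]
  constructor
  · show _ = finprodRatio mu.removable (mu.addable \ {(r, c)})
      fun b => (Ptn.res b : ℚ) - Ptn.res (r, c)
    rw [h.finprodRatio_eq_mul, h.prod_hook_div_row', h.prod_hook_div_col]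
  · show _ = finprodRatio mu.removable (mu.addable \ {(r, c)})
      fun b => (Ptn.res (r, c) : ℚ) - Ptn.res b
    rw [h.finprodRatio_eq_mul, h.prod_hook_div_row, h.prod_hook_div_col']
end

section
/- Let λ be an m-multipartition of n and t a standard λ-tableau in which the number n occupies the node α; let μ be the m-multipartition obtained from λ by removing α. Then, as an identity in the rational function field ℚ(q_1,…,q_m, z): (z − res_t(n))/f(z) · ∏_{i=1}^{n−1} (z − res_t(i))² / ((z − res_t(i) + 1)(z − res_t(i) − 1)) = (z − res_t(n)) · ∏_{β∈R(μ)} (z − res(β)) · ∏_{γ∈A(μ)} (z − res(γ))^{-1}, where f(z) = (z − q_1)(z − q_2)⋯(z − q_m). -/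
open scoped BigOperators

/-- The field `ℚ(q_1, …, q_m, z)` of rational functions in `q_1, …, q_m` and `z`. -/
abbrev FZ (m : ℕ) : Type := FractionRing (MvPolynomial (Option (Fin m)) ℚ)

/-- The indeterminate `q_c` as an element of `ℚ(q_1, …, q_m, z)`. -/
noncomputable def qZ {m : ℕ} (c : Fin m) : FZ m :=
  algebraMap (MvPolynomial (Option (Fin m)) ℚ) (FZ m) (MvPolynomial.X (some c))

/-- The indeterminate `z` as an element of `ℚ(q_1, …, q_m, z)`. -/
noncomputable def zZ (m : ℕ) : FZ m :=
  algebraMap (MvPolynomial (Option (Fin m)) ℚ) (FZ m) (MvPolynomial.X none)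

/-- The residue `res (a, b, c) = b − a + q_c ∈ ℚ(q_1, …, q_m, z)` of a node `(a, b, c)`. -/
noncomputable def resZ {m : ℕ} (x : ℕ × ℕ × Fin m) : FZ m :=
  (x.2.1 : FZ m) - (x.1 : FZ m) + qZ x.2.2


/-!
Since `z − q_c` differs from every integer, the identity splits over the components and
reduces to one partition `L` and an element `w` of a field that is not an integer translate.
Along row `k` the product telescopes to `(v_k + 1)(w + k) / ((w + k + 1) v_k)`, where
`v_k = w + k − L_k`. Over all rows the factors `(w + k) / v_k` telescope to `w / (w − L_0)`,
and what is left is `∏ (v_k + 1) / v_{k+1}`, whose factors are `1` except at the rows `k`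
with `L_{k+1} < L_k`. Those rows index both the removable nodes `(k + 1, L_k)` and the
addable nodes `(k + 2, L_{k+1} + 1)`; the last addable node `(1, L_0 + 1)` gives `w − L_0`.
-/

namespace Ptn

lemma mem_cells_s5 {l : Ptn} {i j : ℕ} :
    (i, j) ∈ l.cells ↔ 1 ≤ i ∧ 1 ≤ j ∧ j ≤ l.part (i - 1) := Iff.rfl

lemma mem_cells_of_le {l : Ptn} {i j i' j' : ℕ} (h : (i, j) ∈ l.cells) (hi' : 1 ≤ i')
    (hi : i' ≤ i) (hj' : 1 ≤ j') (hj : j' ≤ j) : (i', j') ∈ l.cells := by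
  have := l.antitone (Nat.sub_le_sub_right hi 1)
  rw [mem_cells_s5] at *
  omega

def update (l : Ptn) (k v : ℕ) (hnext : l.part (k + 1) ≤ v)
    (hprev : ∀ i, i + 1 = k → v ≤ l.part i) : Ptn where
  part := Function.update l.part k v
  antitone := antitone_nat_of_succ_le fun i => by
    have := l.antitone i.le_succ
    have := hprev i
    simp only [Function.update_apply]
    split_ifs <;> subst_vars <;> omega
  finite_support := by
    obtain ⟨N, hN⟩ := l.finite_support
    refine ⟨max N (k + 1), fun i hi => ?_⟩
    rw [Function.update_of_ne (by omega), hN i (by omega)]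

lemma removable_eq (l : Ptn) :
    l.removable = (fun k => (k + 1, l.part k)) '' {k | l.part (k + 1) < l.part k} := by
  ext ⟨i, j⟩
  simp only [Set.mem_image, Set.mem_ofPred_eq, Prod.mk.injEq]
  constructor
  · rintro ⟨hij, m, hm⟩
    obtain ⟨k, rfl⟩ : ∃ k, i = k + 1 := ⟨i - 1, by have := (mem_cells_s5.1 hij).1; omega⟩
    have hmax : ∀ i' j', (i', j') ∈ l.cells → k + 1 ≤ i' → j ≤ j' →
        (i', j') = (k + 1, j) := by
      intro i' j' h hi hj
      by_contra hne
      have hij' : (i', j') ∈ m.cells := by rw [hm]; exact ⟨h, hne⟩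
      have := mem_cells_of_le hij' (mem_cells_s5.1 hij).1 hi (mem_cells_s5.1 hij).2.1 hj
      rw [hm] at this
      exact this.2 rfl
    have hright := mt (hmax (k + 1) (j + 1)) (by simp)
    have hbelow := mt (hmax (k + 1 + 1) j) (by simp)
    simp only [mem_cells_s5, Nat.add_sub_cancel, not_and, not_le] at hij hright hbelow
    exact ⟨k, by omega, rfl, by omega⟩
  · rintro ⟨k, hk, rfl, rfl⟩
    refine ⟨mem_cells_s5.2 ⟨by omega, by omega, le_rfl⟩,
      l.update k (l.part k - 1) (by omega) fun i hi => ?_, ?_⟩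
    · have := l.antitone (show i ≤ k by omega); omega
    · ext ⟨a, b⟩
      by_cases h : a - 1 = k
      · subst h
        simp only [update, mem_cells_s5, Function.update_self, Set.mem_sdiff,
          Set.mem_singleton_iff, Prod.mk.injEq]
        omega
      · simp only [update, mem_cells_s5, Function.update_of_ne h, Set.mem_sdiff,
          Set.mem_singleton_iff, Prod.mk.injEq]
        omega

lemma addable_eq (l : Ptn) :
    l.addable = insert (1, l.part 0 + 1)
      ((fun k => (k + 2, l.part (k + 1) + 1)) '' {k | l.part (k + 1) < l.part k}) := by
  ext ⟨i, j⟩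
  simp only [Set.mem_insert_iff, Set.mem_image, Set.mem_ofPred_eq, Prod.mk.injEq]
  constructor
  · rintro ⟨hij, m, hm⟩
    have hmem : (i, j) ∈ m.cells := by rw [hm]; exact Or.inr rfl
    have hbelow : ∀ i' j', 1 ≤ i' → i' ≤ i → 1 ≤ j' → j' ≤ j →
        (i', j') ≠ (i, j) → (i', j') ∈ l.cells := by
      intro i' j' hi' hi hj' hj hne
      have := mem_cells_of_le hmem hi' hi hj' hj
      rw [hm] at this
      exact this.resolve_right hne
    obtain ⟨hi, hj, -⟩ := mem_cells_s5.1 hmem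
    have hleft : 2 ≤ j → j - 1 ≤ l.part (i - 1) := fun h =>
      (mem_cells_s5.1 (hbelow i (j - 1) hi le_rfl (by omega) (by omega) (by simp; omega))).2.2
    rw [mem_cells_s5] at hij
    obtain ⟨k, rfl⟩ : ∃ k, i = k + 1 := ⟨i - 1, by omega⟩
    simp only [Nat.add_sub_cancel] at hleft hij
    rcases k with _ | k
    · left; omega
    · right
      have hup := (mem_cells_s5.1 (hbelow (k + 1) j (by omega) (by omega) hj le_rfl
        (by simp))).2.2
      simp only [Nat.add_sub_cancel] at hup
      exact ⟨k, by omega, rfl, by omega⟩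
  · rintro (⟨rfl, rfl⟩ | ⟨k, hk, rfl, rfl⟩)
    · refine ⟨by simp only [mem_cells_s5, Nat.sub_self]; omega, l.update 0 (l.part 0 + 1)
        ((l.antitone (Nat.le_succ _)).trans (Nat.le_succ _)) (fun i hi => by omega), ?_⟩
      ext ⟨a, b⟩
      by_cases h : a - 1 = 0
      · simp only [update, mem_cells_s5, h, Function.update_self, Set.mem_union,
          Set.mem_singleton_iff, Prod.mk.injEq]
        omega
      · simp only [update, mem_cells_s5, Function.update_of_ne h, Set.mem_union,
          Set.mem_singleton_iff, Prod.mk.injEq]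
        omega
    · refine ⟨by simp [mem_cells_s5], l.update (k + 1) (l.part (k + 1) + 1)
        ((l.antitone (Nat.le_succ _)).trans (Nat.le_succ _))
        (fun i hi => by rw [Nat.add_right_cancel hi]; exact hk), ?_⟩
      ext ⟨a, b⟩
      by_cases h : a - 1 = k + 1
      · simp only [update, mem_cells_s5, h, Function.update_self, Set.mem_union,
          Set.mem_singleton_iff, Prod.mk.injEq]
        omega
      · simp only [update, mem_cells_s5, Function.update_of_ne h, Set.mem_union,
          Set.mem_singleton_iff, Prod.mk.injEq]
        omega

lemma cells_eq (l : Ptn) :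
    l.cells = (fun p : ℕ × ℕ => (p.1 + 1, p.2 + 1)) '' {p | p.2 < l.part p.1} := by
  ext ⟨i, j⟩
  simp only [mem_cells_s5, Set.mem_image, Set.mem_ofPred_eq, Prod.mk.injEq, Prod.exists]
  constructor
  · rintro ⟨hi, hj, hle⟩
    exact ⟨i - 1, j - 1, by omega, by omega, by omega⟩
  · rintro ⟨a, b, hab, rfl, rfl⟩
    simp only [Nat.add_sub_cancel]
    omega

end Ptn

open Finset

lemma prod_range_div_of_ne_zero {G : Type*} [CommGroupWithZero G] (f : ℕ → G)
    (hf : ∀ k, f k ≠ 0) (n : ℕ) : ∏ k ∈ range n, f (k + 1) / f k = f n / f 0 := by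
  induction n with
  | zero => simp [div_self (hf 0)]
  | succ n ih => rw [prod_range_succ, ih, mul_comm, div_mul_div_cancel₀ (hf n)]

section NonInteger

variable {K : Type*} [Field K] {w : K}

lemma ne_zero_of_eq_add_intCast (hw : ∀ t : ℤ, w + t ≠ 0) (t : ℤ) {x : K} (hx : x = w + t) :
    x ≠ 0 :=
  hx ▸ hw t

lemma prod_range_sq_div (hw : ∀ t : ℤ, w + t ≠ 0) (l : ℕ) :
    ∏ j ∈ range l, (w - j) ^ 2 / ((w - j + 1) * (w - j - 1)) =
      (w - l + 1) * w / ((w + 1) * (w - l)) := by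
  have h := ne_zero_of_eq_add_intCast hw
  induction l with
  | zero =>
    rw [prod_range_zero, Nat.cast_zero, sub_zero, mul_comm, div_self]
    exact mul_ne_zero (h 0 (by simp)) (h 1 (by simp))
  | succ l ih =>
    have h₁ : w - l ≠ 0 := h (-l) (by push_cast; ring)
    have h₂ : w - l + 1 ≠ 0 := h (-l + 1) (by push_cast; ring)
    have h₃ : w - l - 1 ≠ 0 := h (-l - 1) (by push_cast; ring)
    have h₄ : w - (l + 1) ≠ 0 := h (-l - 1) (by push_cast; ring)
    have h₅ : w + 1 ≠ 0 := h 1 (by push_cast; ring)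
    rw [prod_range_succ, ih]
    push_cast
    field_simp
    ring

lemma prod_rows_sq_div (hw : ∀ t : ℤ, w + t ≠ 0) {L : ℕ → ℕ} (hL : Antitone L) {N : ℕ}
    (hN : L N = 0) :
    ∏ k ∈ range N, ∏ j ∈ range (L k),
        (w + k - j) ^ 2 / ((w + k - j + 1) * (w + k - j - 1)) =
      w / (w - L 0) * ∏ k ∈ range N with L (k + 1) < L k,
        (w + (k + 1) - L k) / (w + (k + 1) - L (k + 1)) := by
  have h := ne_zero_of_eq_add_intCast hw
  set v : ℕ → K := fun k => w + k - L k with hv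
  have hv0 : ∀ k, v k ≠ 0 := fun k => h (k - L k) (by simp only [hv]; push_cast; ring)
  have hw0 : ∀ k : ℕ, w + k ≠ 0 := fun k => h k (by push_cast; rfl)
  have hrow : ∀ k, ∏ j ∈ range (L k), (w + k - j) ^ 2 / ((w + k - j + 1) * (w + k - j - 1)) =
      v (k + 1) / (w + (k + 1 : ℕ)) / (v k / (w + k)) * ((v k + 1) / v (k + 1)) := by
    intro k
    have hk := prod_range_sq_div (w := w + k) (fun t => h (k + t) (by push_cast; ring)) (L k)
    have h₁ : w + k + 1 ≠ 0 := h (k + 1) (by push_cast; ring)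
    have h₂ := hv0 k
    have h₃ := hv0 (k + 1)
    have h₄ := hw0 (k + 1)
    rw [hk]
    simp only [hv] at h₂ h₃ ⊢
    push_cast at h₃ h₄ ⊢
    field_simp
    ring
  have hflat : ∀ k ∈ range N, (v k + 1) / v (k + 1) ≠ 1 → L (k + 1) < L k := by
    intro k _ hne
    by_contra hle
    have hLk : L (k + 1) = L k := le_antisymm (hL k.le_succ) (not_lt.1 hle)
    exact hne (div_eq_one_iff_eq (hv0 (k + 1)) |>.2 (by simp only [hv, hLk]; push_cast; ring))
  rw [prod_congr rfl fun k _ => hrow k, prod_mul_distrib,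
    prod_range_div_of_ne_zero (fun k => v k / (w + k)) (fun k => div_ne_zero (hv0 k) (hw0 k)),
    ← prod_filter_of_ne hflat]
  have hN' : v N = w + N := by simp [hv, hN]
  have h₀ : v 0 = w - L 0 := by simp [hv]
  rw [hN', h₀, div_self (hw0 N)]
  congr 1
  · simp only [Nat.cast_zero, add_zero, one_div_div]
  · refine prod_congr rfl fun k _ => ?_
    simp only [hv]
    push_cast
    ring

end NonInteger

namespace Ptn

variable (l : Ptn)

section BoundedSupport

variable {N : ℕ} (hN : ∀ k, N ≤ k → l.part k = 0)
include hN

lemma setOf_descent_eq :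
    {k | l.part (k + 1) < l.part k} = ↑{k ∈ range N | l.part (k + 1) < l.part k} := by
  ext k
  simp only [Set.mem_ofPred_eq, coe_filter, mem_range]
  refine ⟨fun hk => ⟨?_, hk⟩, And.right⟩
  by_contra hNk
  rw [hN k (by omega)] at hk
  omega

lemma setOf_lt_part_eq :
    {p : ℕ × ℕ | p.2 < l.part p.1} =
      ↑{p ∈ range N ×ˢ range (l.part 0) | p.2 < l.part p.1} := by
  ext ⟨k, j⟩
  simp only [Set.mem_ofPred_eq, coe_filter, mem_product, mem_range]
  refine ⟨fun hj => ⟨⟨?_, hj.trans_le (l.antitone k.zero_le)⟩, hj⟩, And.right⟩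
  by_contra hNk
  rw [hN k (by omega)] at hj
  omega

lemma finprod_mem_setOf_lt_part {M : Type*} [CommMonoid M] (F : ℕ × ℕ → M) :
    ∏ᶠ p ∈ {p : ℕ × ℕ | p.2 < l.part p.1}, F p =
      ∏ k ∈ range N, ∏ j ∈ range (l.part k), F (k, j) := by
  rw [l.setOf_lt_part_eq hN, finprod_mem_coe_finset]
  refine prod_finset_product _ _ _ fun ⟨k, j⟩ => ?_
  simp only [mem_filter, mem_product, mem_range]
  have := l.antitone k.zero_le
  omega

end BoundedSupport

lemma removable_finite_s5 : l.removable.Finite :=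
  l.cells_finite.subset fun _ hx => hx.1

lemma addable_finite_s5 : l.addable.Finite := by
  obtain ⟨N, hN⟩ := l.finite_support
  rw [addable_eq, l.setOf_descent_eq hN]
  exact ((finite_toSet _).image _).insert _

variable {K : Type*} [Field K] {w : K}

theorem finprod_cells_sq_div (hw : ∀ t : ℤ, w + t ≠ 0) :
    ∏ᶠ x ∈ l.cells, (w - res x) ^ 2 / ((w - res x + 1) * (w - res x - 1)) =
      w * (∏ᶠ x ∈ l.removable, (w - res x)) * ∏ᶠ x ∈ l.addable, (w - res x)⁻¹ := by
  obtain ⟨N, hN⟩ := l.finite_support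
  rw [cells_eq, removable_eq, addable_eq, l.setOf_descent_eq hN,
    finprod_mem_insert _ (by rintro ⟨k, -, h⟩; simp at h) ((finite_toSet _).image _),
    finprod_mem_image, finprod_mem_image, finprod_mem_image, l.finprod_mem_setOf_lt_part hN,
    finprod_mem_coe_finset, finprod_mem_coe_finset]
  · have hcell (k j : ℕ) : w - (res (k + 1, j + 1) : K) = w + k - j := by
      simp only [res]; push_cast; ring
    have hrem (k : ℕ) : w - (res (k + 1, l.part k) : K) = w + (k + 1) - l.part k := by
      simp only [res]; push_cast; ring
    simp only [hcell, hrem]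
    push_cast
    rw [prod_rows_sq_div hw l.antitone (hN N le_rfl), prod_div_distrib, prod_inv_distrib]
    ring
  all_goals intro a _ b _ h
  all_goals simp only [Prod.mk.injEq] at h
  · omega
  · omega
  · exact Prod.ext (by omega) (by omega)

end Ptn

lemma finprod_mem_setOf_component {M : Type*} [CommMonoid M] {m : ℕ}
    (s : Fin m → Set (ℕ × ℕ)) (hs : ∀ c, (s c).Finite) (F : ℕ × ℕ × Fin m → M) :
    ∏ᶠ x ∈ {x : ℕ × ℕ × Fin m | (x.1, x.2.1) ∈ s x.2.2}, F x =
      ∏ c, ∏ᶠ y ∈ s c, F (y.1, y.2, c) := by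
  have hunion : {x : ℕ × ℕ × Fin m | (x.1, x.2.1) ∈ s x.2.2} =
      ⋃ c, (fun y : ℕ × ℕ => (y.1, y.2, c)) '' s c := by
    ext ⟨i, j, c⟩
    simp
  rw [hunion, finprod_mem_iUnion, finprod_eq_prod_of_fintype]
  · refine prod_congr rfl fun c _ => finprod_mem_image fun a _ b _ h => ?_
    simp only [Prod.mk.injEq] at h
    exact Prod.ext h.1 h.2.1
  · intro c c' hcc'
    simp only [Function.onFun, Set.disjoint_left, Set.mem_image]
    rintro _ ⟨y, -, rfl⟩ ⟨y', -, h⟩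
    exact hcc' (congrArg (fun x => x.2.2) h).symm
  · exact fun c => (hs c).image _

lemma zZ_sub_qZ_add_intCast_ne_zero {m : ℕ} (c : Fin m) (t : ℤ) : zZ m - qZ c + t ≠ 0 := by
  intro h
  have hpoly : MvPolynomial.X none - MvPolynomial.X (some c) +
      (t : MvPolynomial (Option (Fin m)) ℚ) = 0 :=
    IsFractionRing.injective _ (FZ m) (by rw [map_zero, map_add, map_sub, map_intCast]; exact h)
  have := congrArg (MvPolynomial.eval (Function.update 0 none (1 - (t : ℚ)))) hpoly
  simp at this

lemma zZ_sub_resZ {m : ℕ} (x : ℕ × ℕ × Fin m) :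
    zZ m - resZ x = zZ m - qZ x.2.2 - (Ptn.res (x.1, x.2.1) : FZ m) := by
  simp only [resZ, Ptn.res]
  push_cast
  ring

theorem MPtn.finprod_cells_sq_div {m : ℕ} (mu : MPtn m) :
    ∏ᶠ x ∈ mu.cells, (zZ m - resZ x) ^ 2 / ((zZ m - resZ x + 1) * (zZ m - resZ x - 1)) =
      (∏ c, (zZ m - qZ c)) * (∏ᶠ x ∈ mu.removable, (zZ m - resZ x)) *
        ∏ᶠ x ∈ mu.addable, (zZ m - resZ x)⁻¹ := by
  rw [MPtn.cells, MPtn.removable, MPtn.addable,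
    finprod_mem_setOf_component _ fun c => (mu c).cells_finite,
    finprod_mem_setOf_component _ fun c => (mu c).removable_finite_s5,
    finprod_mem_setOf_component _ fun c => (mu c).addable_finite_s5,
    ← prod_mul_distrib, ← prod_mul_distrib]
  refine prod_congr rfl fun c _ => ?_
  simp only [zZ_sub_resZ, Prod.mk.eta]
  exact (mu c).finprod_cells_sq_div (zZ_sub_qZ_add_intCast_ne_zero c)

lemma prod_erase_eq_finprod_range_sdiff {ι α M : Type*} [Fintype ι] [DecidableEq ι]
    [CommMonoid M] {T : ι → α} (hT : Function.Injective T) (a : ι) (F : α → M) :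
    ∏ k ∈ univ.erase a, F (T k) = ∏ᶠ x ∈ Set.range T \ {T a}, F x := by
  rw [← Set.image_univ, ← Set.image_singleton, ← Set.image_sdiff hT,
    finprod_mem_image hT.injOn, ← coe_univ, ← coe_erase, finprod_mem_coe_finset]

theorem statement5 {m n : ℕ} (hn : 0 < n) (lam : MPtn m)
    (T : Fin n → ℕ × ℕ × Fin m) (hT : IsTableau lam n T)
    (alpha : ℕ × ℕ × Fin m) (halpha : T ⟨n - 1, by omega⟩ = alpha)
    (mu : MPtn m) (hmu : mu.cells = lam.cells \ {alpha}) :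
    (zZ m - resZ alpha) / (∏ c : Fin m, (zZ m - qZ c)) *
        ∏ k ∈ Finset.univ.erase (⟨n - 1, by omega⟩ : Fin n),
          ((zZ m - resZ (T k)) ^ 2 /
            ((zZ m - resZ (T k) + 1) * (zZ m - resZ (T k) - 1))) =
      (zZ m - resZ alpha) * (∏ᶠ b ∈ mu.removable, (zZ m - resZ b)) *
        ∏ᶠ g ∈ mu.addable, (zZ m - resZ g)⁻¹ := by
  obtain ⟨hTinj, hTrange⟩ := hT
  have hf : ∏ c : Fin m, (zZ m - qZ c) ≠ 0 :=
    prod_ne_zero_iff.2 fun c _ => by simpa using zZ_sub_qZ_add_intCast_ne_zero c 0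
  rw [prod_erase_eq_finprod_range_sdiff hTinj _
      fun x => (zZ m - resZ x) ^ 2 / ((zZ m - resZ x + 1) * (zZ m - resZ x - 1)),
    hTrange, halpha, ← hmu, mu.finprod_cells_sq_div]
  field_simp
end

section
/- Let K be a field, n ≥ 3, and let x, y, z ∈ K be pairwise distinct. Then in the group algebra K[S_n], for every i with 1 ≤ i ≤ n−2: t_i(x,y) · t_{i+1}(x,z) · t_i(y,z) = t_{i+1}(y,z) · t_i(x,z) · t_{i+1}(x,y). -/
/-! Expanding both sides, the only terms that differ are `(ab + bc) S + ac U` on the left and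
`ac S + (ab + bc) U` on the right; all other terms match by `S² = U² = 1` and the braid relation.
For `t(x, y)` the scalars are `a = (x - y)⁻¹`, `b = (x - z)⁻¹`, `c = (y - z)⁻¹`, and
`ab + bc = ac` is the partial-fraction identity `(y - z) + (x - y) = x - z`. -/

/-- The Baxterized element `t(x, y) = (x − y)⁻¹·1 + s` in the group algebra `K[S_n]`,
where `s = Equiv.swap a b` (intended: the simple transposition `(a, a+1)`). -/
noncomputable def bax {K : Type*} [Field K] {n : ℕ} (a b : Fin n) (x y : K) :
    MonoidAlgebra K (Equiv.Perm (Fin n)) :=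
  algebraMap K (MonoidAlgebra K (Equiv.Perm (Fin n))) (x - y)⁻¹ +
    MonoidAlgebra.of K (Equiv.Perm (Fin n)) (Equiv.swap a b)

theorem Equiv.swap_mul_swap_mul_swap_braid {α : Type*} [DecidableEq α] {a b c : α}
    (hab : a ≠ b) (hac : a ≠ c) (hbc : b ≠ c) :
    swap a b * swap b c * swap a b = swap b c * swap a b * swap b c := by
  -- both sides are the conjugate transposition `swap a c`
  rw [swap_comm a b, swap_comm b c, swap_mul_swap_mul_swap hbc.symm hac.symm,
    ← swap_comm b c, ← swap_comm a b, swap_mul_swap_mul_swap hab hac, swap_comm]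

theorem yangBaxter_of_braid {K A : Type*} [Field K] [Ring A] [Algebra K A] {S U : A}
    (hS : S * S = 1) (hU : U * U = 1) (hSU : S * U * S = U * S * U)
    {a b c : K} (habc : a * b + b * c = a * c) :
    (algebraMap K A a + S) * (algebraMap K A b + U) * (algebraMap K A c + S) =
      (algebraMap K A c + U) * (algebraMap K A b + S) * (algebraMap K A a + U) := by
  rw [mul_assoc S, mul_assoc U] at hSU
  simp only [Algebra.algebraMap_eq_smul_one, add_mul, mul_add, smul_mul_assoc,
    mul_smul_comm, one_mul, mul_one, mul_assoc, hS, hU, hSU]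
  match_scalars <;> first | ring1 | linear_combination habc | linear_combination -habc

/-- `t_i(x,y) t_{i+1}(x,z) t_i(y,z) = t_{i+1}(y,z) t_i(x,z) t_{i+1}(x,y)` in `K[S_n]`,
where `s_i` is the simple transposition interchanging `i` and `i+1` of `{1, …, n}`
(0-indexed: swap of `i-1` and `i` in `Fin n`). -/
theorem statement7 {K : Type*} [Field K] {n : ℕ}
    (x y z : K) (hxy : x ≠ y) (hxz : x ≠ z) (hyz : y ≠ z)
    (i : ℕ) (hi1 : 1 ≤ i) (hi2 : i ≤ n - 2) :
    bax (⟨i - 1, by omega⟩ : Fin n) ⟨i, by omega⟩ x y *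
        bax (⟨i, by omega⟩ : Fin n) ⟨i + 1, by omega⟩ x z *
        bax (⟨i - 1, by omega⟩ : Fin n) ⟨i, by omega⟩ y z =
      bax (⟨i, by omega⟩ : Fin n) ⟨i + 1, by omega⟩ y z *
        bax (⟨i - 1, by omega⟩ : Fin n) ⟨i, by omega⟩ x z *
        bax (⟨i, by omega⟩ : Fin n) ⟨i + 1, by omega⟩ x y := by
  set p : Fin n := ⟨i - 1, by omega⟩
  set q : Fin n := ⟨i, by omega⟩
  set r : Fin n := ⟨i + 1, by omega⟩
  have hpq : p ≠ q := by simp only [p, q, ne_eq, Fin.mk.injEq]; omega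
  have hpr : p ≠ r := by simp only [p, r, ne_eq, Fin.mk.injEq]; omega
  have hqr : q ≠ r := by simp only [q, r, ne_eq, Fin.mk.injEq]; omega
  have hscalar : (x - y)⁻¹ * (x - z)⁻¹ + (x - z)⁻¹ * (y - z)⁻¹ = (x - y)⁻¹ * (y - z)⁻¹ := by
    field_simp [sub_ne_zero.mpr hxy, sub_ne_zero.mpr hxz, sub_ne_zero.mpr hyz]
    ring
  let of := MonoidAlgebra.of K (Equiv.Perm (Fin n))
  have hinvol (a b : Fin n) : of (Equiv.swap a b) * of (Equiv.swap a b) = 1 := by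
    rw [← map_mul, Equiv.swap_mul_self, map_one]
  have hbraid : of (Equiv.swap p q) * of (Equiv.swap q r) * of (Equiv.swap p q) =
      of (Equiv.swap q r) * of (Equiv.swap p q) * of (Equiv.swap q r) := by
    simp only [← map_mul, Equiv.swap_mul_swap_mul_swap_braid hpq hpr hqr]
  exact yangBaxter_of_braid (hinvol p q) (hinvol q r) hbraid hscalar
end
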